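/- arXiv:2202.10311 — 9 statements merged into one kernel-verified Lean document; each statement's English description precedes it below -/
import Mathlib

section
/- Let X be a compact metric space and 𝒱 a Hermitian line bundle over X with a finite trivializing atlas {h_j : U_j × ℂ → 𝒱|_{U_j}} and subordinate partition of unity {γ_j}. Let ξ_j(x) = h_j(x, γ_j(x)^{1/2}). Then for the correspondence ℰ = Γ(𝒱, α) with left action f·ξ = ξ·(f∘α), the rank-one operator θ_{ξ,η} equals φ(⟨η,ξ⟩∘α^{-1}) for all ξ, η ∈ ℰ, where φ is the structure map. Consequently ℰ admits the structure of a Hilbert C(X)-bimodule with left inner product ⟨ξ,η⟩_L = ⟨η,ξ⟩∘α^{-1}. -/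
/-!
Each fibre of a line bundle is one-dimensional, and in a line writing `ξ, η, ζ` as multiples
`a • v, b • v, c • v` of one vector turns both `⟪η, ζ⟫ • ξ` and `⟪η, ξ⟫ • ζ` into
`(conj b * a * c * ⟪v, v⟫) • v`.
-/

open Bundle Module

theorem inner_smul_comm_of_finrank_eq_one {𝕜 E : Type*} [RCLike 𝕜] [SeminormedAddCommGroup E]
    [InnerProductSpace 𝕜 E] (hE : finrank 𝕜 E = 1) (x y z : E) :
    inner 𝕜 y z • x = inner 𝕜 y x • z := by
  obtain ⟨v, -, hv⟩ := finrank_eq_one_iff'.mp hE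
  obtain ⟨a, rfl⟩ := hv x
  obtain ⟨b, rfl⟩ := hv y
  obtain ⟨c, rfl⟩ := hv z
  simp only [inner_smul_left, inner_smul_right, smul_smul]
  congr 1
  ring

theorem VectorBundle.finrank_fiber {R B F : Type*} (E : B → Type*) [NontriviallyNormedField R]
    [NormedAddCommGroup F] [NormedSpace R F] [TopologicalSpace B]
    [TopologicalSpace (TotalSpace F E)] [∀ x, AddCommMonoid (E x)] [∀ x, Module R (E x)]
    [∀ x, TopologicalSpace (E x)] [FiberBundle F E] [VectorBundle R F E] (x : B) :
    finrank R (E x) = finrank R F :=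
  (Trivialization.continuousLinearEquivAt R (trivializationAt F E x) x
    (FiberBundle.mem_baseSet_trivializationAt' x)).toLinearEquiv.finrank_eq

theorem statement1_general
    (X : Type*) [MetricSpace X]
    (α : X ≃ₜ X)
    (V : X → Type*) [∀ x, NormedAddCommGroup (V x)] [∀ x, InnerProductSpace ℂ (V x)]
    [TopologicalSpace (Bundle.TotalSpace ℂ V)] [FiberBundle ℂ V] [VectorBundle ℂ ℂ V] :
    -- (1) θ_{ξ,η} = φ(⟨η,ξ⟩ ∘ α⁻¹), pointwise: for all sections ξ, η, ζ and all x,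
    --     (ξ · ⟨η,ζ⟩_R)(x) = (φ(⟨η,ξ⟩_R ∘ α⁻¹) ζ)(x), i.e.
    (∀ ξ η ζ : ∀ x, V x,
      (Continuous fun x => (Bundle.TotalSpace.mk x (ξ x) : Bundle.TotalSpace ℂ V)) →
      (Continuous fun x => (Bundle.TotalSpace.mk x (η x) : Bundle.TotalSpace ℂ V)) →
      (Continuous fun x => (Bundle.TotalSpace.mk x (ζ x) : Bundle.TotalSpace ℂ V)) →
      ∀ x : X, (inner ℂ (η x) (ζ x) : ℂ) • ξ x = (inner ℂ (η x) (ξ x) : ℂ) • ζ x) ∧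
    -- (2) consequently, with left inner product ⟨ξ,η⟩_L(x) = ⟨η,ξ⟩_R(α⁻¹ x)
    --     and left action (f·ζ)(x) = f(α x) • ζ x, the Hilbert bimodule compatibility
    --     ξ·⟨η,ζ⟩_R = ⟨ξ,η⟩_L·ζ holds:
    (∀ ξ η ζ : ∀ x, V x, ∀ x : X,
      (inner ℂ (η x) (ζ x) : ℂ) • ξ x
        = (inner ℂ (η (α.symm (α x))) (ξ (α.symm (α x))) : ℂ) • ζ x) := by
  have rank_one_eq (ξ η ζ : ∀ x, V x) (x : X) :
      (inner ℂ (η x) (ζ x) : ℂ) • ξ x = (inner ℂ (η x) (ξ x) : ℂ) • ζ x :=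
    inner_smul_comm_of_finrank_eq_one
      ((VectorBundle.finrank_fiber V x).trans (finrank_self ℂ)) _ _ _
  refine ⟨fun ξ η ζ _ _ _ x => rank_one_eq ξ η ζ x, fun ξ η ζ x => ?_⟩
  rw [α.symm_apply_apply]
  exact rank_one_eq ξ η ζ x

theorem statement1
    (X : Type*) [MetricSpace X] [CompactSpace X]
    (α : X ≃ₜ X)
    (V : X → Type*) [∀ x, NormedAddCommGroup (V x)] [∀ x, InnerProductSpace ℂ (V x)]
    [TopologicalSpace (Bundle.TotalSpace ℂ V)] [FiberBundle ℂ V] [VectorBundle ℂ ℂ V]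
    -- a finite trivializing atlas with subordinate partition of unity and the
    -- associated generating sections ξ_j(x) = h_j(x, γ_j(x)^{1/2})
    (n : ℕ) (U : Fin n → Set X) (hUopen : ∀ j, IsOpen (U j))
    (h : ∀ j, Trivialization ℂ (π ℂ V)) (hbase : ∀ j, (h j).baseSet = U j)
    (γ : Fin n → C(X, ℝ)) (hγ0 : ∀ j, 0 ≤ γ j)
    (hγsupp : ∀ j, tsupport (γ j) ⊆ U j) (hγsum : ∀ x, (∑ j, γ j x) = 1)
    (ξgen : Fin n → ∀ x, V x)
    (hξgen : ∀ j, ∀ x ∈ U j, ξgen j x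
      = (h j).symm x ((Real.sqrt (γ j x) : ℂ))) :
    -- (1) θ_{ξ,η} = φ(⟨η,ξ⟩ ∘ α⁻¹), pointwise: for all sections ξ, η, ζ and all x,
    --     (ξ · ⟨η,ζ⟩_R)(x) = (φ(⟨η,ξ⟩_R ∘ α⁻¹) ζ)(x), i.e.
    (∀ ξ η ζ : ∀ x, V x,
      (Continuous fun x => (Bundle.TotalSpace.mk x (ξ x) : Bundle.TotalSpace ℂ V)) →
      (Continuous fun x => (Bundle.TotalSpace.mk x (η x) : Bundle.TotalSpace ℂ V)) →
      (Continuous fun x => (Bundle.TotalSpace.mk x (ζ x) : Bundle.TotalSpace ℂ V)) →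
      ∀ x : X, (inner ℂ (η x) (ζ x) : ℂ) • ξ x = (inner ℂ (η x) (ξ x) : ℂ) • ζ x) ∧
    -- (2) consequently, with left inner product ⟨ξ,η⟩_L(x) = ⟨η,ξ⟩_R(α⁻¹ x)
    --     and left action (f·ζ)(x) = f(α x) • ζ x, the Hilbert bimodule compatibility
    --     ξ·⟨η,ζ⟩_R = ⟨ξ,η⟩_L·ζ holds:
    (∀ ξ η ζ : ∀ x, V x, ∀ x : X,
      (inner ℂ (η x) (ζ x) : ℂ) • ξ x
        = (inner ℂ (η (α.symm (α x))) (ξ (α.symm (α x))) : ℂ) • ζ x) :=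
  statement1_general X α V
end

section
/- Let ℰ be a nonzero Hilbert C(X)-bimodule, finitely generated projective as a right Hilbert C(X)-module, with right-module generators ξ_1,…,ξ_n satisfying Σ_j ⟨ξ_j,ξ_j⟩_R = 1. Define λ(f) = Σ_j ⟨ξ_j f, ξ_j⟩_L and ρ(f) = Σ_j ⟨ξ_j, f ξ_j⟩_R. Then λ and ρ are *-homomorphisms C(X) → C(X) satisfying ρ∘λ = id_{C(X)} and λ∘ρ(f) = f·Σ_j ⟨ξ_j,ξ_j⟩_L; moreover the element Σ_j ⟨ξ_j,ξ_j⟩_L is a projection in C(X), hence the characteristic function of a clopen subset Y ⊆ X. -/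
/-!
STATEMENT 4. Let `ℰ` be a nonzero Hilbert `C(X)`-bimodule, finitely generated projective
as a right Hilbert `C(X)`-module, with right-module generators `ξ_1, …, ξ_n` satisfying
`Σ_j ⟨ξ_j, ξ_j⟩_R = 1`.  Define `λ(f) = Σ_j ⟨ξ_j·f, ξ_j⟩_L` and `ρ(f) = Σ_j ⟨ξ_j, f·ξ_j⟩_R`.
Then `λ` and `ρ` are *-homomorphisms `C(X) → C(X)` with `ρ ∘ λ = id` and
`λ(ρ(f)) = f · Σ_j ⟨ξ_j, ξ_j⟩_L`; moreover `Σ_j ⟨ξ_j, ξ_j⟩_L` is a projection in `C(X)`,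
hence the characteristic function of a clopen set `Y ⊆ X`.
-/

structure HilbertBimoduleCX (X : Type*) [TopologicalSpace X] [CompactSpace X] where
  E : Type*
  [addCommGroup : AddCommGroup E]
  [module : Module ℂ E]
  smulR : E → C(X, ℂ) → E
  smulL : C(X, ℂ) → E → E
  rInner : E → E → C(X, ℂ)
  lInner : E → E → C(X, ℂ)
  smulR_one : ∀ ξ, smulR ξ 1 = ξ
  smulR_mul : ∀ ξ f g, smulR (smulR ξ f) g = smulR ξ (f * g)
  smulR_add : ∀ ξ η f, smulR (ξ + η) f = smulR ξ f + smulR η f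
  smulR_add' : ∀ ξ f g, smulR ξ (f + g) = smulR ξ f + smulR ξ g
  smulL_one : ∀ ξ, smulL 1 ξ = ξ
  smulL_mul : ∀ f g ξ, smulL (f * g) ξ = smulL f (smulL g ξ)
  smulL_add : ∀ f ξ η, smulL f (ξ + η) = smulL f ξ + smulL f η
  smulL_add' : ∀ f g ξ, smulL (f + g) ξ = smulL f ξ + smulL g ξ
  rInner_conj : ∀ ξ η, rInner η ξ = star (rInner ξ η)
  rInner_add : ∀ ξ η ζ, rInner ξ (η + ζ) = rInner ξ η + rInner ξ ζ
  rInner_smulR : ∀ ξ η f, rInner ξ (smulR η f) = rInner ξ η * f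
  lInner_conj : ∀ ξ η, lInner η ξ = star (lInner ξ η)
  lInner_add : ∀ ξ η ζ, lInner (ξ + η) ζ = lInner ξ ζ + lInner η ζ
  lInner_smulL : ∀ f ξ η, lInner (smulL f ξ) η = f * lInner ξ η
  compat : ∀ ξ η ζ, smulR ξ (rInner η ζ) = smulL (lInner ξ η) ζ

attribute [instance] HilbertBimoduleCX.addCommGroup HilbertBimoduleCX.module

theorem statement4
    (X : Type*) [MetricSpace X] [CompactSpace X]
    (M : HilbertBimoduleCX X)
    (hnz : ∃ ξ : M.E, ξ ≠ 0)
    (n : ℕ) (ξ : Fin n → M.E)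
    -- right-module generators
    (hgen : ∀ ζ : M.E, ∃ a : Fin n → C(X, ℂ), ζ = ∑ j, M.smulR (ξ j) (a j))
    -- normalisation Σ_j ⟨ξ_j, ξ_j⟩_R = 1
    (hnorm : (∑ j, M.rInner (ξ j) (ξ j)) = 1)
    -- λ and ρ
    (lam rho : C(X, ℂ) → C(X, ℂ))
    (hlam : ∀ f, lam f = ∑ j, M.lInner (M.smulR (ξ j) f) (ξ j))
    (hrho : ∀ f, rho f = ∑ j, M.rInner (ξ j) (M.smulL f (ξ j))) :
    -- λ and ρ are *-homomorphisms
    (∀ f g, lam (f + g) = lam f + lam g) ∧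
    (∀ f g, lam (f * g) = lam f * lam g) ∧
    (∀ f, lam (star f) = star (lam f)) ∧
    (∀ f g, rho (f + g) = rho f + rho g) ∧
    (∀ f g, rho (f * g) = rho f * rho g) ∧
    (∀ f, rho (star f) = star (rho f)) ∧
    -- ρ ∘ λ = id
    (∀ f, rho (lam f) = f) ∧
    -- λ ∘ ρ is multiplication by p := Σ_j ⟨ξ_j, ξ_j⟩_L
    (∀ f, lam (rho f) = f * ∑ j, M.lInner (ξ j) (ξ j)) ∧
    -- p is a projection …
    (star (∑ j, M.lInner (ξ j) (ξ j)) = ∑ j, M.lInner (ξ j) (ξ j)) ∧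
    ((∑ j, M.lInner (ξ j) (ξ j)) * (∑ j, M.lInner (ξ j) (ξ j))
        = ∑ j, M.lInner (ξ j) (ξ j)) ∧
    -- … hence the characteristic function of a clopen subset Y ⊆ X
    (∃ Y : Set X, IsClopen Y ∧
      ∀ x, (∑ j, M.lInner (ξ j) (ξ j)) x = Set.indicator Y 1 x) := by
  classical
  have sumR : ∀ (ζ : M.E) (g : Fin n → C(X, ℂ)),
      M.smulR ζ (∑ j, g j) = ∑ j, M.smulR ζ (g j) := fun ζ g =>
    map_sum (AddMonoidHom.mk' (M.smulR ζ) (M.smulR_add' ζ)) g Finset.univ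
  have subR : ∀ (ζ : M.E) (f g : C(X, ℂ)),
      M.smulR ζ (f - g) = M.smulR ζ f - M.smulR ζ g := fun ζ f g =>
    map_sub (AddMonoidHom.mk' (M.smulR ζ) (M.smulR_add' ζ)) f g
  have sumRfst : ∀ (f : C(X, ℂ)) (g : Fin n → M.E),
      M.smulR (∑ j, g j) f = ∑ j, M.smulR (g j) f := fun f g =>
    map_sum (AddMonoidHom.mk' (fun ζ => M.smulR ζ f) (fun a b => M.smulR_add a b f)) g Finset.univ
  have sumL : ∀ (f : C(X, ℂ)) (g : Fin n → M.E),
      M.smulL f (∑ j, g j) = ∑ j, M.smulL f (g j) := fun f g =>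
    map_sum (AddMonoidHom.mk' (M.smulL f) (M.smulL_add f)) g Finset.univ
  have sumLfst : ∀ (ζ : M.E) (g : Fin n → C(X, ℂ)),
      M.smulL (∑ j, g j) ζ = ∑ j, M.smulL (g j) ζ := fun ζ g =>
    map_sum (AddMonoidHom.mk' (fun f => M.smulL f ζ) (fun a b => M.smulL_add' a b ζ)) g Finset.univ
  have subLfst : ∀ (ζ : M.E) (f g : C(X, ℂ)),
      M.smulL (f - g) ζ = M.smulL f ζ - M.smulL g ζ := fun ζ f g =>
    map_sub (AddMonoidHom.mk' (fun f => M.smulL f ζ) (fun a b => M.smulL_add' a b ζ)) f g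
  have rz : ∀ η : M.E, M.rInner η 0 = 0 := fun η => by
    have h := M.rInner_add η 0 0
    rw [add_zero] at h
    exact left_eq_add.mp h
  have lz : ∀ ω : M.E, M.lInner 0 ω = 0 := fun ω => by
    have h := M.lInner_add 0 0 ω
    rw [add_zero] at h
    exact left_eq_add.mp h
  have star_r : ∀ a b : M.E, star (M.rInner a b) = M.rInner b a := fun a b =>
    (M.rInner_conj a b).symm
  have star_l : ∀ a b : M.E, star (M.lInner a b) = M.lInner b a := fun a b =>
    (M.lInner_conj a b).symm
  have hstar0 : ∀ ζ : M.E, ∑ j, M.smulL (M.lInner ζ (ξ j)) (ξ j) = ζ := by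
    intro ζ
    have h1 : M.smulR ζ (∑ j, M.rInner (ξ j) (ξ j)) = ∑ j, M.smulL (M.lInner ζ (ξ j)) (ξ j) := by
      rw [sumR]
      exact Finset.sum_congr rfl fun j _ => M.compat ζ (ξ j) (ξ j)
    rw [hnorm, M.smulR_one] at h1
    exact h1.symm
  have key : ∀ (g : C(X, ℂ)) (ζ : M.E), M.smulR ζ (rho g) = M.smulL g ζ := by
    intro g ζ
    rw [hrho, sumR]
    calc ∑ j, M.smulR ζ (M.rInner (ξ j) (M.smulL g (ξ j)))
        = ∑ j, M.smulL g (M.smulL (M.lInner ζ (ξ j)) (ξ j)) := by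
          refine Finset.sum_congr rfl fun j _ => ?_
          rw [M.compat ζ (ξ j) (M.smulL g (ξ j)), ← M.smulL_mul,
            mul_comm (M.lInner ζ (ξ j)) g, M.smulL_mul]
      _ = M.smulL g (∑ j, M.smulL (M.lInner ζ (ξ j)) (ξ j)) := (sumL g _).symm
      _ = M.smulL g ζ := by rw [hstar0]
  have R : ∀ (g : C(X, ℂ)) (η ζ : M.E),
      M.rInner η (M.smulL g ζ) = M.rInner η ζ * rho g := by
    intro g η ζ
    rw [← key g ζ, M.rInner_smulR]
  have rho_add : ∀ f g, rho (f + g) = rho f + rho g := by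
    intro f g
    rw [hrho f, hrho g, hrho (f + g), ← Finset.sum_add_distrib]
    exact Finset.sum_congr rfl fun j _ => by rw [M.smulL_add', M.rInner_add]
  have rho_sum : ∀ (g : Fin n → C(X, ℂ)), rho (∑ j, g j) = ∑ j, rho (g j) := fun g =>
    map_sum (AddMonoidHom.mk' rho rho_add) g Finset.univ
  have gram : ∀ k j i m : Fin n,
      M.rInner (ξ k) (ξ j) * M.rInner (ξ i) (ξ m)
        = M.rInner (ξ k) (ξ m) * rho (M.lInner (ξ j) (ξ i)) := by
    intro k j i m
    calc M.rInner (ξ k) (ξ j) * M.rInner (ξ i) (ξ m)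
        = M.rInner (ξ k) (M.smulR (ξ j) (M.rInner (ξ i) (ξ m))) := (M.rInner_smulR _ _ _).symm
      _ = M.rInner (ξ k) (M.smulL (M.lInner (ξ j) (ξ i)) (ξ m)) := by rw [M.compat]
      _ = M.rInner (ξ k) (ξ m) * rho (M.lInner (ξ j) (ξ i)) := R _ _ _
  have hq : rho (∑ j, M.lInner (ξ j) (ξ j)) = 1 := by
    have A2 : ∀ k m : Fin n, (∑ j, M.rInner (ξ k) (ξ j) * M.rInner (ξ j) (ξ m))
        = M.rInner (ξ k) (ξ m) * rho (∑ j, M.lInner (ξ j) (ξ j)) := by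
      intro k m
      rw [rho_sum, Finset.mul_sum]
      exact Finset.sum_congr rfl fun j _ => gram k j j m
    have A3 : ∀ k m : Fin n, (∑ j, M.rInner (ξ k) (ξ j) * M.rInner (ξ j) (ξ m))
        = rho (M.lInner (ξ m) (ξ k)) := by
      intro k m
      have h : ∀ j : Fin n, M.rInner (ξ k) (ξ j) * M.rInner (ξ j) (ξ m)
          = M.rInner (ξ j) (ξ j) * rho (M.lInner (ξ m) (ξ k)) := by
        intro j
        calc M.rInner (ξ k) (ξ j) * M.rInner (ξ j) (ξ m)
            = M.rInner (ξ j) (ξ m) * M.rInner (ξ k) (ξ j) := mul_comm _ _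
          _ = M.rInner (ξ j) (ξ j) * rho (M.lInner (ξ m) (ξ k)) := gram j m k j
      rw [Finset.sum_congr rfl fun j _ => h j, ← Finset.sum_mul, hnorm, one_mul]
    have A1 : ∀ k m : Fin n, M.rInner (ξ k) (ξ m) * M.rInner (ξ k) (ξ m)
        = M.rInner (ξ k) (ξ m) * rho (M.lInner (ξ m) (ξ k)) := fun k m => gram k m k m
    have hKey : ∀ j : Fin n, M.rInner (ξ j) (ξ j) * M.rInner (ξ j) (ξ j)
          * rho (∑ i, M.lInner (ξ i) (ξ i))
        = M.rInner (ξ j) (ξ j) * M.rInner (ξ j) (ξ j) := by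
      intro j
      have h23 : M.rInner (ξ j) (ξ j) * rho (∑ i, M.lInner (ξ i) (ξ i))
          = rho (M.lInner (ξ j) (ξ j)) := (A2 j j).symm.trans (A3 j j)
      calc M.rInner (ξ j) (ξ j) * M.rInner (ξ j) (ξ j) * rho (∑ i, M.lInner (ξ i) (ξ i))
          = M.rInner (ξ j) (ξ j) * (M.rInner (ξ j) (ξ j) * rho (∑ i, M.lInner (ξ i) (ξ i))) := by
            ring
        _ = M.rInner (ξ j) (ξ j) * rho (M.lInner (ξ j) (ξ j)) := by rw [h23]
        _ = M.rInner (ξ j) (ξ j) * M.rInner (ξ j) (ξ j) := (A1 j j).symm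
    ext x
    have hx2 : ∑ j : Fin n, (M.rInner (ξ j) (ξ j)) x = 1 := by
      have h := congrArg (fun φ : C(X, ℂ) => φ x) hnorm
      simp only [ContinuousMap.sum_apply, ContinuousMap.one_apply] at h
      exact h
    have hex : ∃ j, (M.rInner (ξ j) (ξ j)) x ≠ 0 := by
      by_contra hcon
      push_neg at hcon
      rw [Finset.sum_eq_zero (fun j _ => hcon j)] at hx2
      exact one_ne_zero hx2.symm
    obtain ⟨j, hj⟩ := hex
    have h := congrArg (fun φ : C(X, ℂ) => φ x) (hKey j)
    simp only [ContinuousMap.mul_apply] at h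
    rw [ContinuousMap.one_apply]
    have h' : (M.rInner (ξ j) (ξ j) x * M.rInner (ξ j) (ξ j) x)
        * (rho (∑ i, M.lInner (ξ i) (ξ i))) x
        = (M.rInner (ξ j) (ξ j) x * M.rInner (ξ j) (ξ j) x) * 1 := by
      rw [mul_one]; exact h
    exact mul_left_cancel₀ (mul_ne_zero hj hj) h'
  have P : ∀ ζ : M.E, M.smulL (∑ j, M.lInner (ξ j) (ξ j)) ζ = ζ := by
    intro ζ
    rw [← key, hq, M.smulR_one]
  have keyL : ∀ (f : C(X, ℂ)) (ζ : M.E), M.smulL (lam f) ζ = M.smulR ζ f := by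
    intro f ζ
    rw [hlam, sumLfst]
    calc ∑ j, M.smulL (M.lInner (M.smulR (ξ j) f) (ξ j)) ζ
        = ∑ j, M.smulR (M.smulR (ξ j) (M.rInner (ξ j) ζ)) f := by
          refine Finset.sum_congr rfl fun j _ => ?_
          rw [← M.compat (M.smulR (ξ j) f) (ξ j) ζ, M.smulR_mul,
            mul_comm f (M.rInner (ξ j) ζ), ← M.smulR_mul]
      _ = M.smulR (∑ j, M.smulR (ξ j) (M.rInner (ξ j) ζ)) f := (sumRfst f _).symm
      _ = M.smulR ζ f := by
          have h1 : (∑ j, M.smulR (ξ j) (M.rInner (ξ j) ζ))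
              = M.smulL (∑ j, M.lInner (ξ j) (ξ j)) ζ := by
            rw [sumLfst]
            exact Finset.sum_congr rfl fun j _ => M.compat (ξ j) (ξ j) ζ
          rw [h1, P]
  have rholam : ∀ f, rho (lam f) = f := by
    intro f
    rw [hrho]
    calc ∑ j, M.rInner (ξ j) (M.smulL (lam f) (ξ j))
        = ∑ j, M.rInner (ξ j) (ξ j) * f := by
          refine Finset.sum_congr rfl fun j _ => ?_
          rw [keyL, M.rInner_smulR]
      _ = (∑ j, M.rInner (ξ j) (ξ j)) * f := (Finset.sum_mul _ _ _).symm
      _ = f := by rw [hnorm, one_mul]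
  have lamrho : ∀ f, lam (rho f) = f * ∑ j, M.lInner (ξ j) (ξ j) := by
    intro f
    rw [hlam, Finset.mul_sum]
    refine Finset.sum_congr rfl fun j _ => ?_
    rw [key, M.lInner_smulL]
  have lam_one : lam 1 = ∑ j, M.lInner (ξ j) (ξ j) := by
    rw [hlam]
    exact Finset.sum_congr rfl fun j _ => by rw [M.smulR_one]
  have p_star : star (∑ j, M.lInner (ξ j) (ξ j)) = ∑ j, M.lInner (ξ j) (ξ j) := by
    rw [star_sum]
    exact Finset.sum_congr rfl fun j _ => star_l (ξ j) (ξ j)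
  have p_idem : (∑ j, M.lInner (ξ j) (ξ j)) * (∑ j, M.lInner (ξ j) (ξ j))
      = ∑ j, M.lInner (ξ j) (ξ j) := by
    have h := lamrho (∑ j, M.lInner (ξ j) (ξ j))
    rw [hq, lam_one] at h
    exact h.symm
  have LF : ∀ (f : C(X, ℂ)) (ζ η : M.E),
      M.lInner (M.smulR ζ f) η = lam f * M.lInner ζ η := by
    intro f ζ η
    rw [← keyL f ζ, M.lInner_smulL]
  have lam_add : ∀ f g, lam (f + g) = lam f + lam g := by
    intro f g
    rw [hlam f, hlam g, hlam (f + g), ← Finset.sum_add_distrib]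
    exact Finset.sum_congr rfl fun j _ => by rw [M.smulR_add', M.lInner_add]
  have lam_mul : ∀ f g, lam (f * g) = lam f * lam g := by
    intro f g
    rw [hlam (f * g)]
    calc ∑ j, M.lInner (M.smulR (ξ j) (f * g)) (ξ j)
        = ∑ j, lam g * M.lInner (M.smulR (ξ j) f) (ξ j) := by
          refine Finset.sum_congr rfl fun j _ => ?_
          rw [← M.smulR_mul, LF]
      _ = lam g * ∑ j, M.lInner (M.smulR (ξ j) f) (ξ j) := (Finset.mul_sum _ _ _).symm
      _ = lam g * lam f := by rw [← hlam]
      _ = lam f * lam g := mul_comm _ _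
  have rho_mul : ∀ f g, rho (f * g) = rho f * rho g := by
    intro f g
    rw [hrho (f * g)]
    calc ∑ k, M.rInner (ξ k) (M.smulL (f * g) (ξ k))
        = ∑ k, M.rInner (ξ k) (M.smulL g (ξ k)) * rho f := by
          refine Finset.sum_congr rfl fun k _ => ?_
          rw [M.smulL_mul, R]
      _ = (∑ k, M.rInner (ξ k) (M.smulL g (ξ k))) * rho f := (Finset.sum_mul _ _ _).symm
      _ = rho g * rho f := by rw [← hrho]
      _ = rho f * rho g := mul_comm _ _
  have adj : ∀ (f : C(X, ℂ)) (α β : M.E),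
      M.rInner (M.smulL f α) β = M.rInner α (M.smulL (star f) β) := by
    intro f α β
    have hz : ∀ ζ : M.E,
        M.smulR ζ (M.rInner (M.smulL f α) β - M.rInner α (M.smulL (star f) β)) = 0 := by
      intro ζ
      rw [subR]
      have h1 : M.smulR ζ (M.rInner (M.smulL f α) β)
          = M.smulL (star f * M.lInner ζ α) β := by
        rw [M.compat ζ (M.smulL f α) β]
        congr 1
        calc M.lInner ζ (M.smulL f α) = star (M.lInner (M.smulL f α) ζ) := M.lInner_conj _ _
          _ = star (f * M.lInner α ζ) := by rw [M.lInner_smulL]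
          _ = star (M.lInner α ζ) * star f := star_mul _ _
          _ = star f * star (M.lInner α ζ) := mul_comm _ _
          _ = star f * M.lInner ζ α := by rw [star_l]
      have h2 : M.smulR ζ (M.rInner α (M.smulL (star f) β))
          = M.smulL (star f * M.lInner ζ α) β := by
        rw [M.compat ζ α (M.smulL (star f) β), ← M.smulL_mul,
          mul_comm (M.lInner ζ α) (star f)]
      rw [h1, h2, sub_self]
    have hrec : M.rInner (M.smulL f α) β - M.rInner α (M.smulL (star f) β) = 0 := by
      calc M.rInner (M.smulL f α) β - M.rInner α (M.smulL (star f) β)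
          = 1 * (M.rInner (M.smulL f α) β - M.rInner α (M.smulL (star f) β)) := (one_mul _).symm
        _ = (∑ j, M.rInner (ξ j) (ξ j))
            * (M.rInner (M.smulL f α) β - M.rInner α (M.smulL (star f) β)) := by rw [hnorm]
        _ = ∑ j, M.rInner (ξ j) (ξ j)
            * (M.rInner (M.smulL f α) β - M.rInner α (M.smulL (star f) β)) :=
          Finset.sum_mul _ _ _
        _ = ∑ j, M.rInner (ξ j)
            (M.smulR (ξ j) (M.rInner (M.smulL f α) β - M.rInner α (M.smulL (star f) β))) :=
          Finset.sum_congr rfl fun j _ => (M.rInner_smulR _ _ _).symm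
        _ = ∑ _j : Fin n, (0 : C(X, ℂ)) := by
            refine Finset.sum_congr rfl fun j _ => ?_
            rw [hz (ξ j), rz]
        _ = 0 := Finset.sum_const_zero
    exact sub_eq_zero.mp hrec
  have rho_star : ∀ f, rho (star f) = star (rho f) := by
    intro f
    rw [hrho (star f), hrho f, star_sum]
    refine Finset.sum_congr rfl fun k _ => ?_
    calc M.rInner (ξ k) (M.smulL (star f) (ξ k))
        = M.rInner (M.smulL f (ξ k)) (ξ k) := (adj f (ξ k) (ξ k)).symm
      _ = star (M.rInner (ξ k) (M.smulL f (ξ k))) := M.rInner_conj _ _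
  have lam_p : ∀ f, lam f * (∑ j, M.lInner (ξ j) (ξ j)) = lam f := by
    intro f
    have h3 := lamrho (lam f)
    rw [rholam f] at h3
    exact h3.symm
  have lam_star : ∀ f, lam (star f) = star (lam f) := by
    intro f
    have hd : ∀ k m : Fin n, ∀ ζ : M.E,
        M.smulL (M.lInner (M.smulR (ξ k) (star f)) (ξ m)
          - M.lInner (ξ k) (M.smulR (ξ m) f)) ζ = 0 := by
      intro k m ζ
      rw [subLfst]
      have h1 : M.smulL (M.lInner (M.smulR (ξ k) (star f)) (ξ m)) ζ
          = M.smulR (ξ k) (star f * M.rInner (ξ m) ζ) := by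
        rw [← M.compat (M.smulR (ξ k) (star f)) (ξ m) ζ, M.smulR_mul]
      have h2 : M.smulL (M.lInner (ξ k) (M.smulR (ξ m) f)) ζ
          = M.smulR (ξ k) (star f * M.rInner (ξ m) ζ) := by
        rw [← M.compat (ξ k) (M.smulR (ξ m) f) ζ]
        congr 1
        calc M.rInner (M.smulR (ξ m) f) ζ
            = star (M.rInner ζ (M.smulR (ξ m) f)) := M.rInner_conj _ _
          _ = star (M.rInner ζ (ξ m) * f) := by rw [M.rInner_smulR]
          _ = star f * star (M.rInner ζ (ξ m)) := star_mul _ _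
          _ = star f * M.rInner (ξ m) ζ := by rw [star_r]
      rw [h1, h2, sub_self]
    have hd2 : ∀ k m : Fin n, ∀ a b : M.E,
        (M.lInner (M.smulR (ξ k) (star f)) (ξ m)
          - M.lInner (ξ k) (M.smulR (ξ m) f)) * M.lInner a b = 0 := by
      intro k m a b
      rw [← M.lInner_smulL, hd k m a, lz]
    have hD : ∀ k m : Fin n,
        (lam (star f) - star (lam f)) * M.lInner (ξ k) (ξ m)
          = M.lInner (M.smulR (ξ k) (star f)) (ξ m) - M.lInner (ξ k) (M.smulR (ξ m) f) := by
      intro k m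
      rw [sub_mul]
      congr 1
      · exact (LF (star f) (ξ k) (ξ m)).symm
      · calc star (lam f) * M.lInner (ξ k) (ξ m)
            = star (lam f) * star (M.lInner (ξ m) (ξ k)) := by rw [star_l]
          _ = star (M.lInner (ξ m) (ξ k) * lam f) := (star_mul _ _).symm
          _ = star (lam f * M.lInner (ξ m) (ξ k)) := by rw [mul_comm (M.lInner (ξ m) (ξ k)) (lam f)]
          _ = star (M.lInner (M.smulR (ξ m) f) (ξ k)) := by rw [← LF]
          _ = M.lInner (ξ k) (M.smulR (ξ m) f) := star_l _ _
    have hDp : (lam (star f) - star (lam f)) * (∑ j, M.lInner (ξ j) (ξ j))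
        = lam (star f) - star (lam f) := by
      rw [sub_mul, lam_p (star f)]
      congr 1
      calc star (lam f) * (∑ j, M.lInner (ξ j) (ξ j))
          = star (lam f) * star (∑ j, M.lInner (ξ j) (ξ j)) := by rw [p_star]
        _ = star ((∑ j, M.lInner (ξ j) (ξ j)) * lam f) := (star_mul _ _).symm
        _ = star (lam f * ∑ j, M.lInner (ξ j) (ξ j)) := by
            rw [mul_comm (∑ j, M.lInner (ξ j) (ξ j)) (lam f)]
        _ = star (lam f) := by rw [lam_p f]
    have e1 : lam (star f) - star (lam f)
        = ∑ k, (M.lInner (M.smulR (ξ k) (star f)) (ξ k)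
            - M.lInner (ξ k) (M.smulR (ξ k) f)) := by
      rw [← hDp, Finset.mul_sum]
      exact Finset.sum_congr rfl fun k _ => hD k k
    have e2 : (lam (star f) - star (lam f)) * (∑ j, M.lInner (ξ j) (ξ j)) = 0 := by
      rw [e1, Finset.sum_mul]
      refine Finset.sum_eq_zero fun k _ => ?_
      rw [Finset.mul_sum]
      exact Finset.sum_eq_zero fun j _ => hd2 k k (ξ j) (ξ j)
    have hfin : lam (star f) - star (lam f) = 0 := by rw [← hDp, e2]
    exact sub_eq_zero.mp hfin
  -- clopen part
  have hdich : ∀ x : X, (∑ j, M.lInner (ξ j) (ξ j)) x = 0 ∨ (∑ j, M.lInner (ξ j) (ξ j)) x = 1 := by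
    intro x
    have h := congrArg (fun φ : C(X, ℂ) => φ x) p_idem
    simp only [ContinuousMap.mul_apply] at h
    have h0 : (∑ j, M.lInner (ξ j) (ξ j)) x * ((∑ j, M.lInner (ξ j) (ξ j)) x - 1) = 0 := by
      rw [mul_sub, mul_one, h, sub_self]
    rcases mul_eq_zero.mp h0 with h0 | h0
    · exact Or.inl h0
    · exact Or.inr (sub_eq_zero.mp h0)
  refine ⟨lam_add, lam_mul, lam_star, rho_add, rho_mul, rho_star, rholam, lamrho,
    p_star, p_idem, ?_⟩
  refine ⟨((∑ j, M.lInner (ξ j) (ξ j) : C(X, ℂ)) : X → ℂ) ⁻¹' {1}, ⟨?_, ?_⟩, ?_⟩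
  · exact isClosed_singleton.preimage (∑ j, M.lInner (ξ j) (ξ j) : C(X, ℂ)).continuous
  · have hYe : ((∑ j, M.lInner (ξ j) (ξ j) : C(X, ℂ)) : X → ℂ) ⁻¹' {1}
        = (((∑ j, M.lInner (ξ j) (ξ j) : C(X, ℂ)) : X → ℂ) ⁻¹' {0})ᶜ := by
      ext x
      simp only [Set.mem_preimage, Set.mem_singleton_iff, Set.mem_compl_iff]
      constructor
      · intro h1 h0
        rw [h0] at h1
        exact one_ne_zero h1.symm
      · intro h0
        rcases hdich x with h | h
        · exact absurd h h0
        · exact h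
    rw [hYe]
    exact (isClosed_singleton.preimage
      (∑ j, M.lInner (ξ j) (ξ j) : C(X, ℂ)).continuous).isOpen_compl
  · intro x
    by_cases hx : x ∈ ((∑ j, M.lInner (ξ j) (ξ j) : C(X, ℂ)) : X → ℂ) ⁻¹' {1}
    · rw [Set.indicator_of_mem hx]
      exact hx
    · rw [Set.indicator_of_notMem hx]
      rcases hdich x with h | h
      · exact h
      · exact absurd h hx
end

section
/- Let X be an infinite compact metric space, α : X → X a homeomorphism, and 𝒱 a vector bundle over X. The C*-correspondence Γ(𝒱,α) is minimal (i.e., the only closed ideals J ⊆ C(X) with ⟨ℰ, φ(J)ℰ⟩ ⊆ J are {0} and C(X)) if and only if α is a minimal homeomorphism (i.e., the only closed α-invariant subsets of X are ∅ and X). -/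
/-!
A closed ideal of `C(X)` is `J = {f | f = 0 on E}` for a closed `E ⊆ X`, with `J = 0` iff
`E = X` and `J = C(X)` iff `E = ∅`. Since `⟨ξ, φ(f)η⟩ = (f ∘ α)·⟨ξ, η⟩`, such a `J` is
invariant as soon as `α(E) ⊆ E`. Conversely, if `x ∈ E` but `α x ∉ E`, pick `f ∈ J` with
`f (α x) ≠ 0` and a continuous section `ξ` with `ξ x ≠ 0` (a bump function in a local
trivialization); then `(f ∘ α)·⟨ξ, ξ⟩` does not vanish at `x`, so it is not in `J`.
So invariant closed ideals and closed `α`-invariant sets correspond, trivial ones to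
trivial ones.
-/

open Bundle Set ContinuousMap

section Sections

variable {X : Type*} [TopologicalSpace X] (𝕜 : Type*) [RCLike 𝕜]
  {F : Type*} [NormedAddCommGroup F] [NormedSpace 𝕜 F]
  {V : X → Type*} [∀ x, AddCommMonoid (V x)] [∀ x, Module 𝕜 (V x)]
  [∀ x, TopologicalSpace (V x)] [TopologicalSpace (TotalSpace F V)] [FiberBundle F V]

theorem Bundle.Trivialization.continuousOn_mk_symmL (e : Trivialization F (π F V))
    [e.IsLinear 𝕜] {g : X → F} (hg : Continuous g) :
    ContinuousOn (fun x => (TotalSpace.mk x (e.symmL 𝕜 x (g x)) : TotalSpace F V)) e.baseSet :=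
  (e.continuousOn_symm.comp (continuous_id.prodMk hg).continuousOn
    fun _ hx => ⟨hx, trivial⟩).congr fun _ hx => by
      simp only [e.symmL_apply hx, Function.comp_apply, id]

theorem Bundle.Trivialization.continuous_mk_symmL_of_tsupport_subset [VectorBundle 𝕜 F V]
    (e : Trivialization F (π F V)) [e.IsLinear 𝕜] {g : X → F} (hg : Continuous g)
    (hsupp : tsupport g ⊆ e.baseSet) :
    Continuous fun x => (TotalSpace.mk x (e.symmL 𝕜 x (g x)) : TotalSpace F V) := by
  have hzero : ContinuousOn (fun x => (TotalSpace.mk x (e.symmL 𝕜 x (g x)) : TotalSpace F V))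
      (tsupport g)ᶜ :=
    (continuous_zeroSection 𝕜 (F := F) (E := V)).continuousOn.congr fun x hx => by
      simp [image_eq_zero_of_notMem_tsupport hx, zeroSection]
  rw [← continuousOn_univ, ← compl_subset_iff_union.mp (compl_subset_compl.mpr hsupp)]
  exact (e.continuousOn_mk_symmL 𝕜 hg).union_of_isOpen hzero e.open_baseSet
    (isClosed_tsupport g).isOpen_compl

theorem exists_continuous_section_ne_zero [VectorBundle 𝕜 F V] [CompactSpace X] [T2Space X]
    [Nontrivial F] (x₀ : X) :
    ∃ s : ∀ x, V x,
      (Continuous fun x => (TotalSpace.mk x (s x) : TotalSpace F V)) ∧ s x₀ ≠ 0 := by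
  obtain ⟨w, hw⟩ := exists_ne (0 : F)
  set e := trivializationAt F V x₀
  have hx₀ : x₀ ∈ e.baseSet := FiberBundle.mem_baseSet_trivializationAt F V x₀
  obtain ⟨ψ, hψ, hψx₀, -⟩ := exists_tsupport_one_of_isOpen_isClosed e.open_baseSet
    isClosed_closure.isCompact isClosed_singleton (singleton_subset_iff.mpr hx₀)
  refine ⟨fun x => e.symmL 𝕜 x ((ψ x : 𝕜) • w),
    e.continuous_mk_symmL_of_tsupport_subset 𝕜 (by fun_prop)
      ((tsupport_smul_subset_left _ _).trans
        ((tsupport_comp_subset RCLike.ofReal_zero _).trans hψ)),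
    fun h => hw ?_⟩
  simp only [hψx₀ rfl, Pi.one_apply, RCLike.ofReal_one, one_smul] at h
  rw [← e.continuousLinearMapAt_symmL (R := 𝕜) hx₀ w, h, map_zero]

end Sections

namespace ContinuousMap

theorem idealOfSet_univ {X R : Type*} [TopologicalSpace X] [Semiring R] [TopologicalSpace R]
    [IsTopologicalSemiring R] : idealOfSet R (univ : Set X) = ⊤ :=
  eq_top_iff.mpr fun _ _ => mem_idealOfSet.mpr fun _ hx => absurd trivial hx

variable {X 𝕜 : Type*} [TopologicalSpace X] [CompactSpace X] [T2Space X] [RCLike 𝕜]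

theorem idealOfSet_inj_of_isOpen {U W : Set X} (hU : IsOpen U) (hW : IsOpen W) :
    idealOfSet 𝕜 U = idealOfSet 𝕜 W ↔ U = W :=
  ⟨fun h => by rw [← setOfIdeal_ofSet_of_isOpen 𝕜 hU, h, setOfIdeal_ofSet_of_isOpen 𝕜 hW],
    congrArg _⟩

theorem idealOfSet_compl_eq_bot_iff {E : Set X} (hE : IsClosed E) :
    idealOfSet 𝕜 Eᶜ = ⊥ ↔ E = univ := by
  rw [← idealOfEmpty_eq_bot, idealOfSet_inj_of_isOpen hE.isOpen_compl isOpen_empty,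
    compl_empty_iff]

theorem idealOfSet_compl_eq_top_iff {E : Set X} (hE : IsClosed E) :
    idealOfSet 𝕜 Eᶜ = ⊤ ↔ E = ∅ := by
  rw [← idealOfSet_univ, idealOfSet_inj_of_isOpen hE.isOpen_compl isOpen_univ, compl_univ_iff]

theorem forall_isClosed_ideal_iff {P : Ideal C(X, 𝕜) → Prop} :
    (∀ J : Ideal C(X, 𝕜), IsClosed (J : Set C(X, 𝕜)) → P J) ↔
      ∀ E : Set X, IsClosed E → P (idealOfSet 𝕜 Eᶜ) := by
  refine ⟨fun h E _ => h _ (idealOfSet_closed 𝕜 _), fun h J hJ => ?_⟩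
  simpa only [compl_compl, idealOfSet_ofIdeal_isClosed hJ] using
    h _ (setOfIdeal_open J).isClosed_compl

theorem forall_comp_mul_mem_idealOfSet_compl_iff {ι : Type*} (a : C(X, X))
    (g : ι → ι → C(X, 𝕜)) (hg : ∀ x, ∃ i, g i i x ≠ 0) {E : Set X} (hE : IsClosed E) :
    (∀ f ∈ idealOfSet 𝕜 Eᶜ, ∀ i j, f.comp a * g i j ∈ idealOfSet 𝕜 Eᶜ) ↔ a '' E ⊆ E := by
  refine ⟨fun h => ?_, fun h f hf i j => ?_⟩
  · rintro _ ⟨x, hx, rfl⟩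
    by_contra hax
    obtain ⟨f, hf, hfax⟩ : ∃ f ∈ idealOfSet 𝕜 Eᶜ, f (a x) ≠ 0 := by
      rwa [← mem_setOfIdeal, setOfIdeal_ofSet_of_isOpen 𝕜 hE.isOpen_compl]
    obtain ⟨i, hi⟩ := hg x
    exact mul_ne_zero hfax hi (mem_idealOfSet.mp (h f hf i i) (not_not.mpr hx))
  · refine mem_idealOfSet.mpr fun x hx => ?_
    rw [compl_compl] at hx
    simp [mem_idealOfSet.mp hf (not_not.mpr (h (mem_image_of_mem a hx)))]

end ContinuousMap

theorem statement5_general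
    (X : Type*) [MetricSpace X] [CompactSpace X]
    (α : X ≃ₜ X)
    (F : Type*) [NormedAddCommGroup F] [NormedSpace ℂ F] [Nontrivial F]
    (V : X → Type*) [∀ x, NormedAddCommGroup (V x)] [∀ x, InnerProductSpace ℂ (V x)]
    [TopologicalSpace (Bundle.TotalSpace F V)] [FiberBundle F V] [VectorBundle ℂ F V]
    -- Hermitian structure: the pointwise inner product of continuous sections is
    -- continuous, so it defines the C(X)-valued inner product of Γ(𝒱)
    (hcont : ∀ ξ η : {s : ∀ x, V x //
        Continuous fun x => (Bundle.TotalSpace.mk x (s x) : Bundle.TotalSpace F V)},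
      Continuous fun x => (inner ℂ (ξ.1 x) (η.1 x) : ℂ)) :
    -- Γ(𝒱, α) is minimal
    ((∀ J : Ideal C(X, ℂ), IsClosed (J : Set C(X, ℂ)) →
        (∀ f ∈ J, ∀ ξ η : {s : ∀ x, V x //
            Continuous fun x => (Bundle.TotalSpace.mk x (s x) : Bundle.TotalSpace F V)},
          (f.comp ⟨⇑α, α.continuous⟩) * (⟨_, hcont ξ η⟩ : C(X, ℂ)) ∈ J) →
        J = ⊥ ∨ J = ⊤)
      ↔
    -- … if and only if α is minimal
      (∀ E : Set X, IsClosed E → (⇑α) '' E ⊆ E → E = ∅ ∨ E = Set.univ)) := by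
  have hΓ (x : X) : ∃ ξ : {s : ∀ x, V x //
      Continuous fun x => (Bundle.TotalSpace.mk x (s x) : Bundle.TotalSpace F V)},
      inner ℂ (ξ.1 x) (ξ.1 x) ≠ 0 := by
    obtain ⟨s, hs, hsx⟩ := exists_continuous_section_ne_zero ℂ (F := F) (V := V) x
    exact ⟨⟨s, hs⟩, inner_self_ne_zero.mpr hsx⟩
  rw [forall_isClosed_ideal_iff]
  refine forall₂_congr fun E hE => imp_congr
    (forall_comp_mul_mem_idealOfSet_compl_iff ⟨α, α.continuous⟩ (fun ξ η => ⟨_, hcont ξ η⟩)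
      hΓ hE) ?_
  rw [idealOfSet_compl_eq_bot_iff hE, idealOfSet_compl_eq_top_iff hE, or_comm]

theorem statement5
    (X : Type*) [MetricSpace X] [CompactSpace X] [Infinite X]
    (α : X ≃ₜ X)
    (F : Type*) [NormedAddCommGroup F] [NormedSpace ℂ F] [Nontrivial F]
    (V : X → Type*) [∀ x, NormedAddCommGroup (V x)] [∀ x, InnerProductSpace ℂ (V x)]
    [TopologicalSpace (Bundle.TotalSpace F V)] [FiberBundle F V] [VectorBundle ℂ F V]
    -- Hermitian structure: the pointwise inner product of continuous sections is
    -- continuous, so it defines the C(X)-valued inner product of Γ(𝒱)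
    (hcont : ∀ ξ η : {s : ∀ x, V x //
        Continuous fun x => (Bundle.TotalSpace.mk x (s x) : Bundle.TotalSpace F V)},
      Continuous fun x => (inner ℂ (ξ.1 x) (η.1 x) : ℂ)) :
    -- Γ(𝒱, α) is minimal
    ((∀ J : Ideal C(X, ℂ), IsClosed (J : Set C(X, ℂ)) →
        (∀ f ∈ J, ∀ ξ η : {s : ∀ x, V x //
            Continuous fun x => (Bundle.TotalSpace.mk x (s x) : Bundle.TotalSpace F V)},
          (f.comp ⟨⇑α, α.continuous⟩) * (⟨_, hcont ξ η⟩ : C(X, ℂ)) ∈ J) →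
        J = ⊥ ∨ J = ⊤)
      ↔
    -- … if and only if α is minimal
      (∀ E : Set X, IsClosed E → (⇑α) '' E ⊆ E → E = ∅ ∨ E = Set.univ)) :=
  statement5_general X α F V hcont
end

section
/- Let X be a compact metric space and 𝒱 a Hermitian vector bundle over X with some fibre of dimension at least 2. Then the Cuntz–Pimsner algebra O(Γ(𝒱,α)) admits no faithful tracial state. More precisely: if {ξ_{i,j}} is a Parseval frame of sections built from a finite trivializing atlas and partition of unity, satisfying Σ_{i,j} ξ_{i,j}ξ_{i,j}* = 1 and Σ_i ⟨ξ_{i,j},ξ_{i,j}⟩ = 1 for each j, then for any faithful tracial state τ one derives 1 = Σ_{i,j} τ(ξ_{i,j}*ξ_{i,j}) > Σ_i τ(ξ_{i,1}*ξ_{i,1}) ≥ 1, a contradiction. -/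
/-!
STATEMENT 8. Let `X` be a compact metric space and `𝒱` a Hermitian vector bundle over
`X` with some fibre of dimension at least 2.  Then the Cuntz–Pimsner algebra
`B = O(Γ(𝒱,α))` admits no faithful tracial state.  We model the situation abstractly:
`B` is a unital C*-algebra containing the images `ξ_{i,j}` (`i` indexing the finite
trivializing atlas, `j = 1, …, n_i` indexing an orthonormal fibre basis, with each
`ξ_{i,j} ≠ 0` and `n_{i₀} ≥ 2` for some `i₀`) of a Parseval frame of sections built
from a partition of unity, satisfying `Σ_{i,j} ξ_{i,j} ξ_{i,j}* = 1`,
`ξ_{i,j}* ξ_{i,j} = γ_i` independent of `j`, and `Σ_i ⟨ξ_{i,j}, ξ_{i,j}⟩ = Σ_i γ_i = 1`.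
Then for any faithful tracial state `τ` one would get
`1 = Σ_{i,j} τ(ξ_{i,j}* ξ_{i,j}) > Σ_i τ(ξ_{i,1}* ξ_{i,1}) ≥ 1`, a contradiction.
-/

open scoped ComplexOrder

theorem statement8
    (X : Type*) [MetricSpace X] [CompactSpace X]
    (α : X ≃ₜ X)
    (B : Type*) [NormedRing B] [StarRing B] [CStarRing B] [NormedAlgebra ℂ B]
    [CompleteSpace B]
    -- the atlas: m charts, the i-th having fibre dimension n i ≥ 1
    (m : ℕ) (n : Fin m → ℕ) (hn : ∀ i, 1 ≤ n i)
    -- some fibre has dimension at least 2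
    (hdim : ∃ i, 2 ≤ n i)
    -- the images in B = O(Γ(𝒱,α)) of the Parseval frame of sections ξ_{i,j}
    (ξ : (i : Fin m) → Fin (n i) → B)
    (hne : ∀ i j, ξ i j ≠ 0)
    -- Σ_{i,j} ξ_{i,j} ξ_{i,j}* = 1  (the frame/reconstruction identity)
    (hframe : (∑ i, ∑ j, ξ i j * star (ξ i j)) = 1)
    -- ⟨ξ_{i,j}, ξ_{i,j}⟩ = γ_i is independent of j …
    (hsame : ∀ i (j j' : Fin (n i)), star (ξ i j) * ξ i j = star (ξ i j') * ξ i j')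
    -- … and Σ_i ⟨ξ_{i,j}, ξ_{i,j}⟩ = 1 for each j; since n i ≥ 1 we record it for j = ⟨0, _⟩
    (hpart : (∑ i, star (ξ i ⟨0, hn i⟩) * ξ i ⟨0, hn i⟩) = 1) :
    -- B has no faithful tracial state
    ¬ ∃ τ : B →ₗ[ℂ] ℂ,
        τ 1 = 1 ∧
        (∀ a : B, 0 ≤ τ (star a * a)) ∧
        (∀ a b : B, τ (a * b) = τ (b * a)) ∧
        (∀ a : B, τ (star a * a) = 0 → a = 0) := by

  rintro ⟨τ, hτ1, hpos, htr, hfaith⟩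
  set t : Fin m → ℂ := fun i => τ (star (ξ i ⟨0, hn i⟩) * ξ i ⟨0, hn i⟩) with ht
  have htpos : ∀ i, 0 ≤ t i := fun i => hpos _
  have htne : ∀ i, t i ≠ 0 := fun i h => hne i ⟨0, hn i⟩ (hfaith _ h)
  have hsum1 : ∑ i, t i = 1 := by
    rw [ht]; rw [← map_sum, hpart, hτ1]
  have hterm : ∀ i j, τ (ξ i j * star (ξ i j)) = t i := by
    intro i j
    rw [htr, hsame i j ⟨0, hn i⟩]
  have hsum2 : ∑ i, (n i : ℂ) * t i = 1 := by
    have h1 : τ (∑ i, ∑ j, ξ i j * star (ξ i j)) = 1 := by rw [hframe, hτ1]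
    rw [map_sum] at h1
    rw [← h1]
    refine Finset.sum_congr rfl fun i _ => ?_
    rw [map_sum]
    simp only [hterm]
    rw [Finset.sum_const, Finset.card_univ, Fintype.card_fin, nsmul_eq_mul]
  obtain ⟨i₀, hi₀⟩ := hdim
  have hle : ∀ i ∈ Finset.univ, (0 : ℂ) ≤ ((n i : ℂ) - 1) * t i := by
    intro i _
    apply mul_nonneg _ (htpos i)
    rw [sub_nonneg]
    exact_mod_cast Nat.one_le_cast.mpr (hn i)
  have hsingle : t i₀ ≤ ∑ i, ((n i : ℂ) - 1) * t i := by
    have h1 : t i₀ ≤ ((n i₀ : ℂ) - 1) * t i₀ := by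
      nth_rewrite 1 [← one_mul (t i₀)]
      apply mul_le_mul_of_nonneg_right _ (htpos i₀)
      rw [le_sub_iff_add_le]
      calc (1 : ℂ) + 1 = ((2 : ℕ) : ℂ) := by norm_num
        _ ≤ (n i₀ : ℂ) := Nat.cast_le.mpr hi₀
    exact h1.trans (Finset.single_le_sum hle (Finset.mem_univ i₀))
  have hzero : ∑ i, ((n i : ℂ) - 1) * t i = 0 := by
    have : ∑ i, ((n i : ℂ) - 1) * t i = (∑ i, (n i : ℂ) * t i) - ∑ i, t i := by
      rw [← Finset.sum_sub_distrib]
      exact Finset.sum_congr rfl fun i _ => by ring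
    rw [this, hsum1, hsum2, sub_self]
  rw [hzero] at hsingle
  exact htne i₀ (le_antisymm hsingle (htpos i₀))
end

section
/- Let X be an infinite compact metric space, 𝒱 a Hermitian line bundle, α : X → X a homeomorphism, and ℰ = Γ(𝒱,α). For any α-invariant Borel probability measure μ on X, the state τ_μ∘Φ on O(ℰ), where τ_μ(f) = ∫_X f dμ and Φ is the canonical gauge-invariant conditional expectation onto C(X), is a tracial state. In particular T(O(ℰ)) ≠ ∅. -/
/-!
STATEMENT 9. Let `X` be an infinite compact metric space, `𝒱` a Hermitian line bundle,
`α : X → X` a homeomorphism, and `ℰ = Γ(𝒱,α)`.  The Cuntz–Pimsner algebra `B = O(ℰ)`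
is modelled abstractly: a unital C*-algebra with an embedding `π` of `C(X)` as the
fixed point algebra of the gauge action, spectral subspaces `E_n` (with `E_n·E_m ⊆
E_{n+m}`, `E_n* = E_{-n}`, `⊕_n E_n` dense), the twisted commutation relation
`π(f)·a = a·π(f∘αⁿ)` for `a ∈ E_n`, the line-bundle identity `a*a = π(f)`,
`aa* = π(f∘α^{-n})` for `a ∈ E_n`, and the gauge conditional expectation `Φ` onto
`C(X)`.  For any `α`-invariant Borel probability measure `μ` on `X`, the functional
`τ_μ ∘ Φ`, `b ↦ ∫_X Φ(b) dμ`, is a tracial state on `O(ℰ)`.  In particular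
`T(O(ℰ)) ≠ ∅`.
-/

open MeasureTheory
open scoped ComplexOrder

/-- ℤ-iterates of a homeomorphism, as continuous maps. -/
noncomputable def cpow {X : Type*} [TopologicalSpace X] (α : X ≃ₜ X) (n : ℤ) : C(X, X) :=
  if 0 ≤ n then ⟨(⇑α)^[n.toNat], α.continuous.iterate _⟩
  else ⟨(⇑α.symm)^[(-n).toNat], α.symm.continuous.iterate _⟩

/-- An abstract model of the Cuntz–Pimsner algebra `O(Γ(𝒱,α))` of a line bundle `𝒱`
twisted by a homeomorphism `α`, together with its gauge grading and the gauge
conditional expectation onto `C(X)`. -/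
structure CPLineSystem (X : Type*) [TopologicalSpace X] [CompactSpace X] (α : X ≃ₜ X)
    (B : Type*) [NormedRing B] [StarRing B] [CStarRing B] [NormedAlgebra ℂ B]
    [CompleteSpace B] where
  /-- the canonical copy of `C(X)` inside `O(ℰ)` -/
  π : C(X, ℂ) →⋆ₐ[ℂ] B
  π_injective : Function.Injective π
  /-- the spectral subspaces `E_n` of the gauge action -/
  Esub : ℤ → Submodule ℂ B
  mem_E0 : ∀ b, b ∈ Esub 0 ↔ ∃ f, π f = b
  Esub_mul : ∀ m n a b, a ∈ Esub m → b ∈ Esub n → a * b ∈ Esub (m + n)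
  Esub_star : ∀ n a, a ∈ Esub n → star a ∈ Esub (-n)
  /-- the algebraic direct sum `⊕_n E_n` is dense -/
  dense_graded : Dense ((⨆ n : ℤ, Esub n : Submodule ℂ B) : Set B)
  /-- `f·ξ = ξ·(f∘αⁿ)` for `ξ ∈ E_n` -/
  twist : ∀ (n : ℤ) (a : B), a ∈ Esub n → ∀ f : C(X, ℂ),
    π f * a = a * π (f.comp (cpow α n))
  /-- for `ξ ∈ E_n`, `ξ*ξ = π(⟨ξ,ξ⟩_R)` and `ξξ* = π(⟨ξ,ξ⟩_R ∘ α^{-n})` (line bundle) -/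
  switch : ∀ (n : ℤ) (a : B), a ∈ Esub n → ∃ f : C(X, ℂ),
    star a * a = π f ∧ a * star a = π (f.comp (cpow α (-n)))
  /-- the gauge conditional expectation, with values in `C(X)` -/
  ΦC : B →ₗ[ℂ] C(X, ℂ)
  ΦC_π : ∀ f, ΦC (π f) = f
  ΦC_graded : ∀ (n : ℤ) (a : B), a ∈ Esub n → n ≠ 0 → ΦC a = 0
  ΦC_contraction : ∀ b, ‖ΦC b‖ ≤ ‖b‖
  ΦC_faithful : ∀ b, ΦC (star b * b) = 0 → b = 0

/-!
The state `τ = τ_μ ∘ Φ` is a contraction with `τ 1 = 1` that vanishes on every spectral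
subspace `E_n` with `n ≠ 0`. Hence `τ (a b) = τ (b a)` only has to be checked for `a ∈ E_m`,
`b ∈ E_{-m}`, and by polarization only for `a = d`, `b = d*`: there `d* d = π f` and
`d d* = π (f ∘ α^{-m})`, which have the same integral because `μ` is `α`-invariant.
For positivity, if `a = ∑ ξ_n` with `ξ_n ∈ E_n` then `τ (a* a) = ∑ τ (ξ_n* ξ_n)`, and
`ξ_n* ξ_n = π f` with `f ≥ 0` because an injective `*`-homomorphism of C*-algebras preserves
spectra. Both properties extend from the dense subalgebra `⊕ E_n` to all of `O(ℰ)` by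
continuity of `τ`.
-/

theorem StarAlgHom.starModule {R A B : Type*} [CommSemiring R] [StarRing R] [Semiring A]
    [StarRing A] [Algebra R A] [StarModule R A] [Semiring B] [StarRing B] [Algebra R B]
    (π : A →⋆ₐ[R] B) : StarModule R B where
  star_smul c b := by
    rw [Algebra.smul_def, Algebra.smul_def, star_mul, Algebra.commutes (star c),
      ← AlgHomClass.commutes π, ← AlgHomClass.commutes π, ← map_star,
      algebraMap_star_comm]

theorem ContinuousMap.nonneg_of_map_eq_star_mul_self {X B : Type*} [TopologicalSpace X]
    [CompactSpace X] [CStarAlgebra B] (π : C(X, ℂ) →⋆ₐ[ℂ] B) (hπ : Function.Injective π)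
    {f : C(X, ℂ)} {ξ : B} (h : π f = star ξ * ξ) : 0 ≤ f := by
  have hf : IsSelfAdjoint f := hπ.eq_iff.mp <| by
    rw [map_star, h, star_mul, star_star]
  refine ContinuousMap.le_def.mpr fun x => ?_
  have hx : ((f x).re : ℂ) = f x := Complex.conj_eq_iff_re.mp <| by
    simpa using congr($(hf.star_eq) x)
  have hmem : (f x).re ∈ spectrum ℝ f := by
    rw [← spectrum.algebraMap_mem_iff ℂ, Complex.coe_algebraMap, hx,
      ContinuousMap.spectrum_eq_range]
    exact ⟨x, rfl⟩
  have hspec := hf.map_spectrum_real π hπ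
  rw [h] at hspec
  rw [ContinuousMap.zero_apply, ← hx]
  exact_mod_cast spectrum_star_mul_self_nonneg _ (hspec.symm ▸ hmem)

theorem map_mul_star_comm_of_forall_mem {A : Type*} [Ring A] [StarRing A] [Algebra ℂ A]
    [StarModule ℂ A] (τ : A →ₗ[ℂ] ℂ) (V : Submodule ℂ A)
    (h : ∀ d ∈ V, τ (d * star d) = τ (star d * d)) {a c : A} (ha : a ∈ V) (hc : c ∈ V) :
    τ (a * star c) = τ (star c * a) := by
  -- polarization for the sesquilinear form `D`, which vanishes on the diagonal of `V`
  set D : A → A → ℂ := fun u v => τ (u * star v) - τ (star v * u)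
  have hD : ∀ d ∈ V, D d d = 0 := fun d hd => sub_eq_zero.mpr (h d hd)
  have hexp : ∀ t : ℂ, D (a + t • c) (a + t • c) =
      D a a + star t * D a c + t * D c a + t * star t * D c c := by
    intro t
    simp only [D, star_add, star_smul, add_mul, mul_add, smul_mul_assoc, mul_smul_comm,
      map_add, map_smul, smul_eq_mul]
    ring
  have h1 := hexp 1
  have hI := hexp Complex.I
  rw [hD _ (V.add_mem ha (V.smul_mem _ hc)), hD a ha, hD c hc] at h1 hI
  simp only [star_one, one_mul, Complex.star_def, Complex.conj_I] at h1 hI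
  have hac : D a c = 0 := by
    linear_combination -(1 / 2 : ℂ) * h1 - (Complex.I / 2) * hI
      + (D a c - D c a) / 2 * Complex.I_sq
  exact sub_eq_zero.mp hac

theorem measurePreserving_cpow {X : Type*} [TopologicalSpace X] [MeasurableSpace X]
    [BorelSpace X] {μ : Measure X} {α : X ≃ₜ X} (hα : MeasurePreserving α μ μ)
    (n : ℤ) : MeasurePreserving (cpow α n) μ μ := by
  unfold cpow
  split_ifs
  exacts [hα.iterate _, (hα.symm α.toMeasurableEquiv).iterate _]

theorem integral_comp_cpow {X : Type*} [TopologicalSpace X] [MeasurableSpace X]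
    [BorelSpace X] {μ : Measure X} {α : X ≃ₜ X} (hα : MeasurePreserving α μ μ)
    (n : ℤ) (f : C(X, ℂ)) : ∫ x, f (cpow α n x) ∂μ = ∫ x, f x ∂μ := by
  conv_rhs => rw [← (measurePreserving_cpow hα n).map_eq]
  exact (integral_map (cpow α n).continuous.aemeasurable
    f.continuous.aestronglyMeasurable).symm

theorem LinearMap.map_mul_comm_of_mem_iSup {R A M ι : Type*} [CommSemiring R] [Semiring A]
    [Algebra R A] [AddCommMonoid M] [Module R M] (τ : A →ₗ[R] M) (E : ι → Submodule R A)
    (h : ∀ m n, ∀ a ∈ E m, ∀ b ∈ E n, τ (a * b) = τ (b * a))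
    {a b : A} (ha : a ∈ ⨆ n, E n) (hb : b ∈ ⨆ n, E n) : τ (a * b) = τ (b * a) := by
  have key (c : A) (hc : ∀ n, ∀ a ∈ E n, τ (a * c) = τ (c * a)) :
      ⨆ n, E n ≤ LinearMap.eqLocus (τ ∘ₗ .mulRight R c) (τ ∘ₗ .mulLeft R c) :=
    iSup_le hc
  exact key b (fun n a' ha' => Eq.symm (key a' (fun m b' hb' => h m n b' hb' a' ha') hb)) ha

theorem ContinuousMap.integrable {X : Type*} [TopologicalSpace X] [CompactSpace X]
    [MeasurableSpace X] [OpensMeasurableSpace X] (μ : Measure X) [IsFiniteMeasure μ]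
    (f : C(X, ℂ)) : Integrable f μ :=
  (BoundedContinuousFunction.mkOfCompact f).integrable μ

namespace CPLineSystem

variable {X : Type*} [TopologicalSpace X] [CompactSpace X] [MeasurableSpace X] [BorelSpace X]
  {α : X ≃ₜ X} {B : Type*} [NormedRing B] [StarRing B] [CStarRing B] [NormedAlgebra ℂ B]
  [CompleteSpace B] (S : CPLineSystem X α B) (μ : Measure X) [IsProbabilityMeasure μ]

/-- The state `τ_μ ∘ Φ`. -/
noncomputable def gaugeState : B →L[ℂ] ℂ :=
  LinearMap.mkContinuous
    { toFun b := ∫ x, S.ΦC b x ∂μ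
      map_add' a b := by
        simp only [map_add, ContinuousMap.add_apply]
        exact integral_add ((S.ΦC a).integrable μ) ((S.ΦC b).integrable μ)
      map_smul' c b := by
        simp only [map_smul, ContinuousMap.smul_apply, RingHom.id_apply]
        exact integral_smul c _ }
    1 fun b => by
      simpa using ((BoundedContinuousFunction.mkOfCompact (S.ΦC b)).norm_integral_le_norm μ).trans
        (S.ΦC_contraction b)

theorem gaugeState_apply (b : B) : S.gaugeState μ b = ∫ x, S.ΦC b x ∂μ := rfl

theorem gaugeState_π (f : C(X, ℂ)) : S.gaugeState μ (S.π f) = ∫ x, f x ∂μ := by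
  rw [gaugeState_apply, S.ΦC_π]

theorem gaugeState_one : S.gaugeState μ 1 = 1 := by
  rw [← map_one S.π, gaugeState_π]
  simp

theorem gaugeState_eq_zero_of_mem {n : ℤ} {b : B} (hb : b ∈ S.Esub n) (hn : n ≠ 0) :
    S.gaugeState μ b = 0 := by
  rw [gaugeState_apply, S.ΦC_graded n b hb hn]
  simp

section StarModule

variable [StarModule ℂ B]

theorem gaugeState_star_mul_self_nonneg_of_mem {n : ℤ} {ξ : B} (hξ : ξ ∈ S.Esub n) :
    0 ≤ S.gaugeState μ (star ξ * ξ) := by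
  let _ : CStarAlgebra B := {}
  obtain ⟨f, hf, -⟩ := S.switch n ξ hξ
  rw [hf, gaugeState_π]
  exact integral_nonneg (ContinuousMap.nonneg_of_map_eq_star_mul_self S.π S.π_injective hf.symm)

theorem gaugeState_star_mul_self_nonneg_of_mem_iSup {a : B} (ha : a ∈ ⨆ n, S.Esub n) :
    0 ≤ S.gaugeState μ (star a * a) := by
  classical
  obtain ⟨v, hv, rfl⟩ := (Submodule.mem_iSup_iff_exists_finsupp S.Esub a).mp ha
  rw [Finsupp.sum, star_sum, Finset.sum_mul_sum, map_sum]
  refine Finset.sum_nonneg fun i hi => ?_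
  rw [map_sum, Finset.sum_eq_single_of_mem i hi fun j _ hji =>
    S.gaugeState_eq_zero_of_mem μ (S.Esub_mul _ _ _ _ (S.Esub_star i _ (hv i)) (hv j)) (by omega)]
  exact S.gaugeState_star_mul_self_nonneg_of_mem μ (hv i)

theorem gaugeState_star_mul_self_nonneg (a : B) : 0 ≤ S.gaugeState μ (star a * a) :=
  S.dense_graded.induction (fun a ha => S.gaugeState_star_mul_self_nonneg_of_mem_iSup μ ha)
    (isClosed_le continuous_const (by fun_prop)) a

end StarModule

variable {μ}

theorem gaugeState_mul_star_self (hα : MeasurePreserving α μ μ) {n : ℤ} {d : B}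
    (hd : d ∈ S.Esub n) :
    S.gaugeState μ (d * star d) = S.gaugeState μ (star d * d) := by
  obtain ⟨f, hf, hf'⟩ := S.switch n d hd
  rw [hf, hf', gaugeState_π, gaugeState_π]
  exact integral_comp_cpow hα (-n) f

variable [StarModule ℂ B]

theorem gaugeState_mul_comm_of_mem (hα : MeasurePreserving α μ μ) {m n : ℤ} {a b : B}
    (ha : a ∈ S.Esub m) (hb : b ∈ S.Esub n) :
    S.gaugeState μ (a * b) = S.gaugeState μ (b * a) := by
  by_cases hmn : m + n = 0
  · have hb' : star b ∈ S.Esub m := by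
      simpa [show -n = m by omega] using S.Esub_star n b hb
    simpa using map_mul_star_comm_of_forall_mem (S.gaugeState μ).toLinearMap (S.Esub m)
      (fun d hd => S.gaugeState_mul_star_self hα hd) ha hb'
  · rw [S.gaugeState_eq_zero_of_mem μ (S.Esub_mul m n a b ha hb) hmn,
      S.gaugeState_eq_zero_of_mem μ (S.Esub_mul n m b a hb ha) (by omega)]

theorem gaugeState_mul_comm (hα : MeasurePreserving α μ μ) (a b : B) :
    S.gaugeState μ (a * b) = S.gaugeState μ (b * a) :=
  (S.dense_graded.prod S.dense_graded).induction
    (P := fun p => S.gaugeState μ (p.1 * p.2) = S.gaugeState μ (p.2 * p.1))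
    (fun _ hp => LinearMap.map_mul_comm_of_mem_iSup (S.gaugeState μ).toLinearMap S.Esub
      (fun _ _ _ ha _ hb => S.gaugeState_mul_comm_of_mem hα ha hb) hp.1 hp.2)
    (isClosed_eq (by fun_prop) (by fun_prop)) (a, b)

end CPLineSystem

theorem statement9_general
    (X : Type*) [MetricSpace X] [CompactSpace X]
    [MeasurableSpace X] [BorelSpace X]
    (α : X ≃ₜ X)
    (B : Type*) [NormedRing B] [StarRing B] [CStarRing B] [NormedAlgebra ℂ B]
    [CompleteSpace B]
    (S : CPLineSystem X α B)
    -- μ is an α-invariant Borel probability measure on X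
    (μ : Measure X) [IsProbabilityMeasure μ]
    (hinv : Measure.map (⇑α) μ = μ) :
    -- τ_μ ∘ Φ is a tracial state on O(ℰ); in particular T(O(ℰ)) ≠ ∅
    ∃ τ : B →ₗ[ℂ] ℂ,
      (∀ b : B, τ b = ∫ x, S.ΦC b x ∂μ) ∧
      τ 1 = 1 ∧
      (∀ a : B, 0 ≤ τ (star a * a)) ∧
      (∀ a b : B, τ (a * b) = τ (b * a)) := by
  let _ := S.π.starModule
  have hα : MeasurePreserving α μ μ := ⟨α.continuous.measurable, hinv⟩
  exact ⟨S.gaugeState μ, S.gaugeState_apply μ, S.gaugeState_one μ,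
    S.gaugeState_star_mul_self_nonneg μ, S.gaugeState_mul_comm hα⟩

theorem statement9
    (X : Type*) [MetricSpace X] [CompactSpace X] [Infinite X]
    [MeasurableSpace X] [BorelSpace X]
    (α : X ≃ₜ X)
    (B : Type*) [NormedRing B] [StarRing B] [CStarRing B] [NormedAlgebra ℂ B]
    [CompleteSpace B]
    (S : CPLineSystem X α B)
    -- μ is an α-invariant Borel probability measure on X
    (μ : Measure X) [IsProbabilityMeasure μ]
    (hinv : Measure.map (⇑α) μ = μ) :
    -- τ_μ ∘ Φ is a tracial state on O(ℰ); in particular T(O(ℰ)) ≠ ∅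
    ∃ τ : B →ₗ[ℂ] ℂ,
      (∀ b : B, τ b = ∫ x, S.ΦC b x ∂μ) ∧
      τ 1 = 1 ∧
      (∀ a : B, 0 ≤ τ (star a * a)) ∧
      (∀ a b : B, τ (a * b) = τ (b * a)) :=
  statement9_general X α B S μ hinv
end

section
/- Let X be an infinite compact metric space, α : X → X a minimal homeomorphism, 𝒱 a line bundle, ℰ = Γ(𝒱,α). Then the Cuntz–Pimsner algebra O(ℰ) is stably finite, because it is simple and admits a tracial state, which must therefore be faithful. -/
open scoped ComplexOrder

section cpow

variable {X : Type*} [TopologicalSpace X] (α : X ≃ₜ X)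

theorem Homeomorph.coe_pow (n : ℕ) : ⇑(α ^ n) = (⇑α)^[n] := by
  induction n with
  | zero => rfl
  | succ n ih => ext x; simp [pow_succ, ih, Function.iterate_succ_apply]

theorem coe_cpow (n : ℤ) : ⇑(cpow α n) = ⇑(α ^ n) := by
  cases n with
  | ofNat n => simp [cpow, Homeomorph.coe_pow]
  | negSucc n =>
    rw [cpow, if_neg (Int.negSucc_lt_zero n).not_ge, zpow_negSucc, ← inv_pow,
      Homeomorph.coe_pow]
    rfl

theorem cpow_zero_apply (x : X) : cpow α 0 x = x := by simp [coe_cpow]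

theorem cpow_add_one_apply (n : ℤ) (x : X) : cpow α (n + 1) x = cpow α n (α x) := by
  simp [coe_cpow, zpow_add_one]

theorem cpow_apply_cpow_neg (n : ℤ) (x : X) : cpow α n (cpow α (-n) x) = x := by
  rw [coe_cpow, coe_cpow, ← Homeomorph.mul_apply, ← zpow_add, add_neg_cancel, zpow_zero,
    Homeomorph.one_apply]

theorem apply_comp_cpow {Y M : Type*} [TopologicalSpace Y] {φ : C(X, Y) → M}
    (hφ : ∀ f, φ (f.comp α) = φ f) (n : ℤ) (f : C(X, Y)) : φ (f.comp (cpow α n)) = φ f := by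
  have hsucc (n : ℤ) (f : C(X, Y)) : f.comp (cpow α (n + 1)) = (f.comp (cpow α n)).comp α := by
    ext x; exact congrArg f (cpow_add_one_apply α n x)
  induction n using Int.induction_on with
  | zero => exact congrArg φ (by ext x; exact congrArg f (cpow_zero_apply α x))
  | succ n ih => rw [hsucc, hφ, ih]
  | pred n ih => rw [← hφ, ← hsucc, sub_add_cancel, ih]

end cpow

section UnitalContraction

variable {A : Type*} [CStarAlgebra A] {φ : A →ₗ[ℂ] ℂ}

theorem nontrivial_of_map_one (hφ1 : φ 1 = 1) : Nontrivial A :=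
  nontrivial_of_ne 1 0 fun h => by simp [h] at hφ1

theorem im_apply_eq_zero_of_isSelfAdjoint (hφ : ∀ a, ‖φ a‖ ≤ ‖a‖) (hφ1 : φ 1 = 1) {a : A}
    (ha : IsSelfAdjoint a) : (φ a).im = 0 := by
  have := nontrivial_of_map_one hφ1
  -- `‖a + i t‖² = ‖a² + t²‖` bounds `|φ a + i t|²` by `‖a‖² + t²` for every real `t`.
  have key (t : ℝ) : 2 * (φ a).im * t ≤ ‖a‖ ^ 2 - ‖φ a‖ ^ 2 := by
    have hsq : star (a + (Complex.I * t) • 1) * (a + (Complex.I * t) • 1)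
        = a * a + ((t ^ 2 : ℝ) : ℂ) • 1 := by
      have hc : star (Complex.I * t) * (Complex.I * t) = ((t ^ 2 : ℝ) : ℂ) := by
        simp [Complex.ext_iff, sq]
      have hc' : star (Complex.I * t) = -(Complex.I * t) := by simp
      rw [star_add, ha.star_eq, star_smul, star_one, ← hc]
      simp only [add_mul, mul_add, smul_mul_assoc, mul_smul_comm, one_mul, mul_one]
      rw [hc']
      module
    have hle : ‖φ a + Complex.I * t‖ ^ 2 ≤ ‖a‖ ^ 2 + t ^ 2 := calc
      ‖φ a + Complex.I * t‖ ^ 2 = ‖φ (a + (Complex.I * t) • 1)‖ ^ 2 := by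
        simp [hφ1]
      _ ≤ ‖a + (Complex.I * t) • 1‖ ^ 2 := by gcongr; exact hφ _
      _ = ‖a * a + ((t ^ 2 : ℝ) : ℂ) • 1‖ := by
        rw [← hsq, CStarRing.norm_star_mul_self, sq]
      _ ≤ ‖a‖ ^ 2 + t ^ 2 := by
        grw [norm_add_le, norm_mul_le, norm_smul, norm_one]
        simp [sq]
    have hnorm : ‖φ a + Complex.I * t‖ ^ 2 = ‖φ a‖ ^ 2 + 2 * (φ a).im * t + t ^ 2 := by
      simp only [Complex.sq_norm, Complex.normSq_apply, Complex.add_re, Complex.add_im,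
        Complex.mul_re, Complex.mul_im, Complex.I_re, Complex.I_im, Complex.ofReal_re,
        Complex.ofReal_im]
      ring
    linarith
  by_contra him
  have := key ((‖a‖ ^ 2 - ‖φ a‖ ^ 2 + 1) / (2 * (φ a).im))
  rw [mul_div_cancel₀ _ (by simpa using him)] at this
  linarith

variable [PartialOrder A] [StarOrderedRing A]

theorem apply_nonneg_of_nonneg (hφ : ∀ a, ‖φ a‖ ≤ ‖a‖) (hφ1 : φ 1 = 1) {a : A} (ha : 0 ≤ a) :
    0 ≤ φ a := by
  have := nontrivial_of_map_one hφ1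
  have hsub : ‖algebraMap ℝ A ‖a‖ - a‖ ≤ ‖a‖ :=
    (CStarAlgebra.norm_le_iff_le_algebraMap _ (norm_nonneg a)
      (sub_nonneg.2 (IsSelfAdjoint.le_algebraMap_norm_self ha.isSelfAdjoint))).2
      (sub_le_self _ ha)
  have hre : |‖a‖ - (φ a).re| ≤ ‖a‖ := calc
    |‖a‖ - (φ a).re| = |(φ (algebraMap ℝ A ‖a‖ - a)).re| := by
      simp [Algebra.algebraMap_eq_smul_one, hφ1]
    _ ≤ ‖a‖ := (Complex.abs_re_le_norm _).trans ((hφ _).trans hsub)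
  refine Complex.nonneg_iff.2 ⟨?_, (im_apply_eq_zero_of_isSelfAdjoint hφ hφ1 ha.isSelfAdjoint).symm⟩
  linarith [(abs_le.1 hre).2]

end UnitalContraction

section InvariantState

variable {X : Type*} [TopologicalSpace X] [CompactSpace X] [Nonempty X] (α : C(X, X))

theorem one_le_norm_one_sub_comp_sub (F : C(X, ℂ)) : 1 ≤ ‖1 - (F.comp α - F)‖ := by
  obtain ⟨z, -, hz⟩ := isCompact_univ.exists_isMaxOn Set.univ_nonempty
    (Complex.continuous_re.comp F.continuous).continuousOn
  have hαz : (F (α z)).re ≤ (F z).re := hz (Set.mem_univ (α z))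
  calc (1 : ℝ) ≤ 1 - ((F (α z)).re - (F z).re) := by linarith
    _ = (1 - (F.comp α - F) z).re := by simp
    _ ≤ ‖(1 - (F.comp α - F)) z‖ := Complex.re_le_norm _
    _ ≤ ‖1 - (F.comp α - F)‖ := ContinuousMap.norm_coe_le_norm _ z

theorem exists_invariant_state : ∃ φ : C(X, ℂ) →ₗ[ℂ] ℂ,
    (∀ f, ‖φ f‖ ≤ ‖f‖) ∧ φ 1 = 1 ∧ ∀ f, φ (f.comp α) = φ f := by
  let L : C(X, ℂ) →ₗ[ℂ] C(X, ℂ) :=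
    (ContinuousMap.compStarAlgHom' ℂ ℂ α).toAlgHom.toLinearMap - LinearMap.id
  let W := LinearMap.range L
  have hmk : ‖(W.mkQ 1 : C(X, ℂ) ⧸ W)‖ = 1 := by
    refine le_antisymm ((Submodule.Quotient.norm_mk_le W 1).trans_eq norm_one) ?_
    rw [show ‖(W.mkQ 1 : C(X, ℂ) ⧸ W)‖ = Metric.infDist 1 (W : Set C(X, ℂ)) from
      QuotientAddGroup.norm_mk (S := W.toAddSubgroup) 1]
    refine (Metric.le_infDist ⟨0, W.zero_mem⟩).2 ?_
    rintro _ ⟨F, rfl⟩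
    rw [dist_eq_norm]
    exact one_le_norm_one_sub_comp_sub α F
  obtain ⟨g, hg, hg1⟩ := exists_dual_vector'' ℂ (W.mkQ 1)
  refine ⟨g.toLinearMap ∘ₗ W.mkQ, fun f => ?_, ?_, fun f => ?_⟩
  · calc ‖g (W.mkQ f)‖ ≤ ‖g‖ * ‖W.mkQ f‖ := g.le_opNorm _
      _ ≤ 1 * ‖f‖ := by gcongr; exact Submodule.Quotient.norm_mk_le W f
      _ = ‖f‖ := one_mul _
  · rw [hmk] at hg1
    simpa using hg1
  · have : W.mkQ (L f) = 0 := (Submodule.Quotient.mk_eq_zero W).2 ⟨f, rfl⟩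
    simpa [L, sub_eq_zero] using congrArg g this

end InvariantState

section Minimal

variable {X : Type*} [TopologicalSpace X] [CompactSpace X] {α : X ≃ₜ X}

theorem exists_finset_forall_exists_cpow_mem
    (hmin : ∀ E : Set X, IsClosed E → α '' E ⊆ E → E = ∅ ∨ E = Set.univ) {U : Set X}
    (hU : IsOpen U) (hne : U.Nonempty) : ∃ T : Finset ℤ, ∀ x, ∃ n ∈ T, cpow α n x ∈ U := by
  let V := ⋃ n : ℤ, cpow α n ⁻¹' U
  have hVcompl : α '' Vᶜ ⊆ Vᶜ := by
    rintro _ ⟨x, hx, rfl⟩ ⟨_, ⟨n, rfl⟩, hn⟩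
    exact hx (Set.mem_iUnion.2 ⟨n + 1, by simpa [cpow_add_one_apply] using hn⟩)
  have hV : Vᶜ = ∅ := by
    refine (hmin Vᶜ (isOpen_iUnion fun n => hU.preimage (cpow α n).continuous).isClosed_compl
      hVcompl).resolve_right fun h => ?_
    obtain ⟨y, hy⟩ := hne
    exact (h ▸ Set.mem_univ y : y ∈ Vᶜ) (Set.mem_iUnion.2 ⟨0, by simpa [cpow_zero_apply] using hy⟩)
  obtain ⟨T, hT⟩ := isCompact_univ.elim_finite_subcover (fun n : ℤ => cpow α n ⁻¹' U)
    (fun n => hU.preimage (cpow α n).continuous) (Set.compl_empty_iff.1 hV).ge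
  exact ⟨T, fun x => by simpa using hT (Set.mem_univ x)⟩

theorem eq_zero_of_invariant_state_eq_zero
    (hmin : ∀ E : Set X, IsClosed E → α '' E ⊆ E → E = ∅ ∨ E = Set.univ)
    {φ : C(X, ℂ) →ₗ[ℂ] ℂ} (hpos : ∀ f, 0 ≤ f → 0 ≤ φ f) (hφ1 : φ 1 = 1)
    (hinv : ∀ f, φ (f.comp α) = φ f) {f : C(X, ℂ)} (hf : 0 ≤ f) (hφf : φ f = 0) : f = 0 := by
  by_contra hne
  obtain ⟨y, hy⟩ : ∃ y, f y ≠ 0 := by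
    by_contra! h
    exact hne (ContinuousMap.ext h)
  have hfy : 0 < (f y).re := (Complex.pos_iff.1 ((hf y).lt_of_ne' hy)).1
  set r := (f y).re / 2
  obtain ⟨T, hT⟩ := exists_finset_forall_exists_cpow_mem hmin
    (isOpen_lt continuous_const (Complex.continuous_re.comp f.continuous)) ⟨y, half_lt_self hfy⟩
  let G := ∑ n ∈ T, f.comp (cpow α n)
  have hG : (r : ℂ) • 1 ≤ G := fun x => by
    obtain ⟨n, hnT, hn⟩ := hT x
    calc ((r : ℂ) • 1 : C(X, ℂ)) x = r := by simp
      _ ≤ f (cpow α n x) := Complex.le_def.2 ⟨hn.le, (Complex.nonneg_iff.1 (hf _)).2⟩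
      _ ≤ G x := by
        simpa [G] using Finset.single_le_sum (f := fun n => f (cpow α n x)) (fun n _ => hf _) hnT
  have hφG : φ G = 0 := by simp [G, map_sum, apply_comp_cpow α hinv, hφf]
  have := hpos _ (sub_nonneg.2 hG)
  rw [map_sub, hφG, map_smul, hφ1, smul_eq_mul, mul_one, zero_sub, neg_nonneg] at this
  exact absurd (show r ≤ 0 by exact_mod_cast this) (half_pos hfy).not_ge

end Minimal

theorem LinearMap.map_mul_comm_of_dense_iSup {R B M ι : Type*} [CommRing R] [Ring B] [Algebra R B]
    [TopologicalSpace B] [IsTopologicalRing B] [AddCommGroup M] [Module R M] [TopologicalSpace M]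
    [T2Space M] (E : ι → Submodule R B) (hE : Dense ((⨆ i, E i : Submodule R B) : Set B))
    (τ : B →ₗ[R] M) (hτ : Continuous τ) (h : ∀ i j, ∀ a ∈ E i, ∀ b ∈ E j, τ (a * b) = τ (b * a))
    (a b : B) : τ (a * b) = τ (b * a) := by
  let β : B →ₗ[R] B →ₗ[R] M := (LinearMap.mul R B - (LinearMap.mul R B).flip).compr₂ τ
  have hβ (a b : B) : β a b = 0 ↔ τ (a * b) = τ (b * a) := by simp [β, sub_eq_zero]
  have hleft (i : ι) (a : B) (ha : a ∈ E i) : ⨆ j, E j ≤ LinearMap.ker (β a) :=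
    iSup_le fun j b hb => (hβ a b).2 (h i j a ha b hb)
  have hsup : ∀ a ∈ ⨆ i, E i, ∀ b ∈ ⨆ i, E i, τ (a * b) = τ (b * a) := fun a ha b hb =>
    (hβ a b).1 <| (iSup_le fun i a ha => hleft i a ha hb : ⨆ i, E i ≤ LinearMap.ker (β.flip b)) ha
  have := Continuous.ext_on (hE.prod hE) (hτ.comp (continuous_fst.mul continuous_snd))
    (hτ.comp (continuous_snd.mul continuous_fst)) fun p hp => hsup p.1 hp.1 p.2 hp.2
  exact congrFun this (a, b)

namespace Matrix

variable {n B R : Type*} [Fintype n] [Ring B] [AddCommGroup R] (τ : B →+ R)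

theorem map_trace_mul_comm (htrace : ∀ a b, τ (a * b) = τ (b * a)) (M N : Matrix n n B) :
    τ (M * N).trace = τ (N * M).trace := by
  simp only [trace, diag, mul_apply, map_sum, htrace (M _ _)]
  exact Finset.sum_comm

variable [StarRing B] [PartialOrder R] [IsOrderedAddMonoid R]

theorem eq_zero_of_map_trace_star_mul_self_eq_zero (hpos : ∀ c, 0 ≤ τ (star c * c))
    (hfaithful : ∀ c, τ (star c * c) = 0 → c = 0) {M : Matrix n n B}
    (hM : τ (star M * M).trace = 0) : M = 0 := by
  simp only [trace, diag, mul_apply, star_apply, map_sum] at hM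
  rw [Finset.sum_eq_zero_iff_of_nonneg fun i _ => Finset.sum_nonneg fun l _ => hpos _] at hM
  ext l i
  exact hfaithful _ <| (Finset.sum_eq_zero_iff_of_nonneg fun l _ => hpos _).1
    (hM i (Finset.mem_univ i)) l (Finset.mem_univ l)

theorem mul_star_eq_one_of_faithful_trace [DecidableEq n] (htrace : ∀ a b, τ (a * b) = τ (b * a))
    (hpos : ∀ c, 0 ≤ τ (star c * c)) (hfaithful : ∀ c, τ (star c * c) = 0 → c = 0)
    {a : Matrix n n B} (ha : star a * a = 1) : a * star a = 1 := by
  have hq : star (1 - a * star a) * (1 - a * star a) = 1 - a * star a := calc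
    _ = 1 - 2 * (a * star a) + a * (star a * a) * star a := by
      simp only [star_sub, star_one, star_mul, star_star]; noncomm_ring
    _ = 1 - a * star a := by rw [ha]; noncomm_ring
  have htrace_q : τ (1 - a * star a).trace = 0 := by
    rw [trace_sub, map_sub, map_trace_mul_comm τ htrace, ha, sub_self]
  rw [← hq] at htrace_q
  exact (sub_eq_zero.1 (eq_zero_of_map_trace_star_mul_self_eq_zero τ hpos hfaithful htrace_q)).symm

end Matrix

theorem StarModule.of_starAlgHom {R A B : Type*} [CommSemiring R] [StarRing R] [Semiring A]
    [StarRing A] [Algebra R A] [StarModule R A] [Semiring B] [StarRing B] [Algebra R B]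
    (π : A →⋆ₐ[R] B) : StarModule R B where
  star_smul r b := by
    have h1 : star (r • (1 : B)) = star r • 1 := by
      rw [← map_one π, ← map_smul, ← map_star, star_smul, star_one, map_smul, map_one]
    rw [← mul_one b, ← mul_smul_comm, star_mul, h1, smul_mul_assoc, one_mul, star_mul, star_one,
      one_mul]

namespace CPLineSystem

variable {X : Type*} [TopologicalSpace X] [CompactSpace X] {α : X ≃ₜ X} {B : Type*} [NormedRing B]
  [StarRing B] [CStarRing B] [NormedAlgebra ℂ B] [CompleteSpace B] (S : CPLineSystem X α B)

theorem ΦC_one : S.ΦC 1 = 1 := by simpa using S.ΦC_π 1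

theorem ΦC_star_mul_self_nonneg (c : B) : 0 ≤ S.ΦC (star c * c) := by
  -- `B` becomes a C⋆-algebra once `StarModule ℂ B` is recovered from `π`; order it spectrally.
  have := StarModule.of_starAlgHom S.π
  let : CStarAlgebra B := {}
  let := CStarAlgebra.spectralOrder B
  let := CStarAlgebra.spectralOrderedRing B
  intro x
  refine apply_nonneg_of_nonneg (φ := (ContinuousMap.evalCLM ℂ x).toLinearMap ∘ₗ S.ΦC)
    (fun b => ?_) (by simp [ΦC_one]) (star_mul_self_nonneg c)
  exact (ContinuousMap.norm_coe_le_norm _ x).trans (S.ΦC_contraction b)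

theorem ΦC_mul_eq_comp_cpow {m : ℤ} {a b : B} (ha : a ∈ S.Esub m) (hb : b ∈ S.Esub (-m)) :
    S.ΦC (a * b) = (S.ΦC (b * a)).comp (cpow α (-m)) := by
  obtain ⟨h, hh⟩ := (S.mem_E0 _).1 (by simpa using S.Esub_mul _ _ _ _ ha hb)
  obtain ⟨h', hh'⟩ := (S.mem_E0 _).1 (by simpa using S.Esub_mul _ _ _ _ hb ha)
  rw [← hh, ← hh', S.ΦC_π, S.ΦC_π]
  -- Twisting `a` and `b` past `π` gives `h² = h g` and `g² = g h` for `g = h' ∘ α⁻ᵐ`,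
  -- so `(h - g)² = 0`.
  have h1 : h * h = h * h'.comp (cpow α (-m)) := S.π_injective <| by
    rw [map_mul, map_mul, hh, mul_assoc a b (S.π _), ← S.twist _ _ hb, hh']
    simp only [mul_assoc]
  have h2 : h' * h' = h' * h.comp (cpow α m) := S.π_injective <| by
    rw [map_mul, map_mul, hh', mul_assoc b a (S.π _), ← S.twist _ _ ha, hh]
    simp only [mul_assoc]
  set g := h'.comp (cpow α (-m))
  have h2' : g * g = g * h := by
    ext x
    simpa [g, cpow_apply_cpow_neg] using congr($h2 (cpow α (-m) x))
  ext x
  have p1 := congr($h1 x)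
  have p2 := congr($h2' x)
  simp only [ContinuousMap.mul_apply] at p1 p2
  exact sub_eq_zero.1 (mul_self_eq_zero.1 (by linear_combination p1 + p2))

theorem map_ΦC_mul_comm {φ : C(X, ℂ) →ₗ[ℂ] ℂ} (hφ : ∀ f, ‖φ f‖ ≤ ‖f‖)
    (hinv : ∀ f, φ (f.comp α) = φ f) (a b : B) : φ (S.ΦC (a * b)) = φ (S.ΦC (b * a)) := by
  refine (φ ∘ₗ S.ΦC).map_mul_comm_of_dense_iSup S.Esub S.dense_graded ?_ ?_ a b
  · exact AddMonoidHomClass.continuous_of_bound (φ ∘ₗ S.ΦC) 1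
      fun b => by simpa using (hφ _).trans (S.ΦC_contraction b)
  · intro m n a ha b hb
    by_cases hmn : n = -m
    · subst hmn
      simp [S.ΦC_mul_eq_comp_cpow ha hb, apply_comp_cpow α hinv]
    · simp only [LinearMap.comp_apply]
      rw [S.ΦC_graded _ _ (S.Esub_mul _ _ _ _ ha hb) (by omega),
        S.ΦC_graded _ _ (S.Esub_mul _ _ _ _ hb ha) (by omega)]

end CPLineSystem

theorem statement11
    (X : Type*) [MetricSpace X] [CompactSpace X] [Infinite X]
    (α : X ≃ₜ X)
    -- α is minimal
    (hmin : ∀ E : Set X, IsClosed E → (⇑α) '' E ⊆ E → E = ∅ ∨ E = Set.univ)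
    (B : Type*) [NormedRing B] [StarRing B] [CStarRing B] [NormedAlgebra ℂ B]
    [CompleteSpace B]
    (S : CPLineSystem X α B) :
    -- O(ℰ) is stably finite
    ∀ (k : ℕ) (a : Matrix (Fin k) (Fin k) B),
      star a * a = 1 → a * star a = 1 := by
  obtain ⟨φ, hφ, hφ1, hinv⟩ := exists_invariant_state (α : C(X, X))
  have hpos (f : C(X, ℂ)) (hf : 0 ≤ f) : 0 ≤ φ f := apply_nonneg_of_nonneg hφ hφ1 hf
  intro k a ha
  exact Matrix.mul_star_eq_one_of_faithful_trace (φ ∘ₗ S.ΦC).toAddMonoidHom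
    (S.map_ΦC_mul_comm hφ hinv) (fun c => hpos _ (S.ΦC_star_mul_self_nonneg c))
    (fun c hc => S.ΦC_faithful c <|
      eq_zero_of_invariant_state_eq_zero hmin hpos hφ1 hinv (S.ΦC_star_mul_self_nonneg c) hc) ha
end

section
/- Let X be an infinite compact metric space of finite covering dimension, α : X → X an aperiodic homeomorphism, and 𝒱 a vector bundle over X. Then the C*-correspondence ℰ = Γ(𝒱,α) has finite Rokhlin dimension: if positive contractions f_i^{(l)} ∈ C(X) (i ∈ ℤ/pℤ, 0 ≤ l ≤ d) witness Rokhlin dimension d of the homeomorphism α (i.e., ‖f_i^{(l)} f_j^{(l)}‖ < ε for i ≠ j, ‖Σ_{l,i} f_i^{(l)} − 1‖ < ε, ‖f_i^{(l)}∘α^{-1} − f_{i+1}^{(l)}‖ < ε), then the same functions witness Rokhlin dimension at most d of the correspondence, using the estimate ‖ξ·f_i^{(l)} − f_{i+1}^{(l)}·ξ‖ ≤ ‖f_i^{(l)}∘α^{-1} − f_{i+1}^{(l)}‖·‖ξ‖ for sections ξ. -/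
/-!
STATEMENT 12. Let `X` be an infinite compact metric space of finite covering dimension
and `α : X → X` an aperiodic homeomorphism, `𝒱` a vector bundle over `X`.  Then the
C*-correspondence `ℰ = Γ(𝒱,α)` (a normed right `C(X)`-module with left action
`f·ξ = ξ·(f∘α)`, modelled abstractly) has finite Rokhlin dimension: if positive
contractions `f_i^{(l)} ∈ C(X)` (`i ∈ ℤ/pℤ`, `0 ≤ l ≤ d`) witness Rokhlin dimension `d`
(with single towers) of the homeomorphism `α`, then the same functions witness Rokhlin
dimension at most `d` of the correspondence, via
`‖ξ·f_i^{(l)} − f_{i+1}^{(l)}·ξ‖ ≤ ‖f_i^{(l)}∘α⁻¹ − f_{i+1}^{(l)}‖·‖ξ‖`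
(note `f·ξ = ξ·(f∘α)`, and condition (4) is automatic since `C(X)` is commutative).
-/

universe u

/-- Lebesgue covering dimension at most `n`. -/
def CoveringDimLE (X : Type u) [TopologicalSpace X] (n : ℕ) : Prop :=
  ∀ (ι : Type u) (U : ι → Set X), (∀ i, IsOpen (U i)) → (⋃ i, U i) = Set.univ →
    ∃ (κ : Type u) (W : κ → Set X), (∀ j, IsOpen (W j)) ∧ (⋃ j, W j) = Set.univ ∧
      (∀ j, ∃ i, W j ⊆ U i) ∧
      ∀ x : X, {j | x ∈ W j}.Finite ∧ {j | x ∈ W j}.ncard ≤ n + 1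

/-- map `C(X,ℝ) → C(X,ℂ)`. -/
noncomputable def toC {X : Type u} [TopologicalSpace X] (f : C(X, ℝ)) : C(X, ℂ) :=
  ⟨fun x => (f x : ℂ), Complex.continuous_ofReal.comp f.continuous⟩

/-- An abstract normed right Hilbert `C(X)`-module (such as `Γ(𝒱)`); the twisted left
action is `f·ξ = ξ·(f∘α)`. -/
structure NormedRightModuleCX (X : Type u) [TopologicalSpace X] [CompactSpace X] where
  E : Type u
  [add : AddCommGroup E]
  [mod : Module ℂ E]
  smulR : E → C(X, ℂ) → E
  nrm : E → ℝ
  smulR_one : ∀ ξ, smulR ξ 1 = ξ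
  smulR_mul : ∀ ξ f g, smulR (smulR ξ f) g = smulR ξ (f * g)
  smulR_add : ∀ ξ η f, smulR (ξ + η) f = smulR ξ f + smulR η f
  smulR_add' : ∀ ξ f g, smulR ξ (f + g) = smulR ξ f + smulR ξ g
  nrm_nonneg : ∀ ξ, 0 ≤ nrm ξ
  nrm_add_le : ∀ ξ η, nrm (ξ + η) ≤ nrm ξ + nrm η
  nrm_neg : ∀ ξ, nrm (-ξ) = nrm ξ
  nrm_smulR_le : ∀ ξ f, nrm (smulR ξ f) ≤ nrm ξ * ‖f‖

attribute [instance] NormedRightModuleCX.add NormedRightModuleCX.mod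

theorem statement12
    (X : Type u) [MetricSpace X] [CompactSpace X] [Infinite X]
    (α : X ≃ₜ X)
    -- α is aperiodic
    (haper : ∀ (n : ℕ), 0 < n → ∀ x : X, (⇑α)^[n] x ≠ x)
    -- X has finite covering dimension
    (hdim : ∃ n, CoveringDimLE X n)
    -- ℰ = Γ(𝒱,α), as a normed right C(X)-module
    (M : NormedRightModuleCX X)
    (d : ℕ)
    -- the homeomorphism α has Rokhlin dimension (with single towers) at most d:
    (hRok : ∀ ε > (0:ℝ), ∀ p : ℕ, ∀ hp : 0 < p,
      ∃ f : Fin (d + 1) → Fin p → C(X, ℝ),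
        (∀ l k, 0 ≤ f l k ∧ f l k ≤ 1) ∧
        (∀ l (k k' : Fin p), k ≠ k' → ‖toC (f l k) * toC (f l k')‖ < ε) ∧
        (‖(∑ l, ∑ k, toC (f l k)) - 1‖ < ε) ∧
        (∀ l (k : Fin p),
          ‖(f l k).comp ⟨⇑α.symm, α.symm.continuous⟩
              - f l ⟨((k : ℕ) + 1) % p, Nat.mod_lt _ hp⟩‖ < ε)) :
    -- then the correspondence Γ(𝒱,α) has Rokhlin dimension at most d:
    ∀ ε > (0:ℝ), ∀ p : ℕ, ∀ hp : 0 < p,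
      ∀ (F : Finset C(X, ℂ)) (G : Finset M.E),
      ∃ f : Fin (d + 1) → Fin p → C(X, ℝ),
        (∀ l k, 0 ≤ f l k ∧ f l k ≤ 1) ∧
        -- (1) the towers are ε-orthogonal
        (∀ l (k k' : Fin p), k ≠ k' → ‖toC (f l k) * toC (f l k')‖ < ε) ∧
        -- (2) they ε-sum to one
        (‖(∑ l, ∑ k, toC (f l k)) - 1‖ < ε) ∧
        -- (3) ‖ξ·f_k^{(l)} − f_{k+1}^{(l)}·ξ‖ < ε, where f·ξ = ξ·(f∘α)
        (∀ ξ ∈ G, ∀ l (k : Fin p),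
          M.nrm (M.smulR ξ (toC (f l k))
            - M.smulR ξ ((toC (f l ⟨((k : ℕ) + 1) % p, Nat.mod_lt _ hp⟩)).comp
                ⟨⇑α, α.continuous⟩)) < ε) ∧
        -- (4) ε-commutation with the finite set F (automatic, C(X) is commutative)
        (∀ a ∈ F, ∀ l (k : Fin p), ‖toC (f l k) * a - a * toC (f l k)‖ < ε) := by
  intro ε hε p hp F G
  -- constant controlling norms of elements of G
  set C : ℝ := ∑ ξ ∈ G, M.nrm ξ with hCdef
  have hC0 : 0 ≤ C := Finset.sum_nonneg fun ξ _ => M.nrm_nonneg ξ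
  have h1C : (0:ℝ) < 1 + C := by linarith
  set ε' : ℝ := ε / (1 + C) with hε'def
  have hε' : 0 < ε' := div_pos hε h1C
  have hε'le : ε' ≤ ε := by
    rw [hε'def, div_le_iff₀ h1C]
    nlinarith
  obtain ⟨f, hpos, horth, hsum, htow⟩ := hRok ε' hε' p hp
  refine ⟨f, hpos, fun l k k' hkk' => lt_of_lt_of_le (horth l k k' hkk') hε'le,
    lt_of_lt_of_le hsum hε'le, ?_, ?_⟩
  · -- condition (3)
    intro ξ hξ l k
    set k' : Fin p := ⟨((k : ℕ) + 1) % p, Nat.mod_lt _ hp⟩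
    set A : C(X, ℂ) := toC (f l k)
    set B : C(X, ℂ) := (toC (f l k')).comp ⟨⇑α, α.continuous⟩
    set h : C(X, ℝ) := (f l k).comp ⟨⇑α.symm, α.symm.continuous⟩ - f l k'
    have hh : ‖h‖ < ε' := htow l k
    -- rewrite difference of right actions
    have hsub : M.smulR ξ A - M.smulR ξ B = M.smulR ξ (A - B) := by
      have := M.smulR_add' ξ (A - B) B
      rw [sub_add_cancel] at this
      rw [this]; abel
    have hAB : ‖A - B‖ ≤ ‖h‖ := by
      refine ContinuousMap.norm_le _ (norm_nonneg h) |>.2 fun x => ?_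
      have : (A - B) x = ((h (α x) : ℝ) : ℂ) := by
        simp only [A, B, h, toC, ContinuousMap.sub_apply, ContinuousMap.comp_apply,
          ContinuousMap.coe_mk, Homeomorph.symm_apply_apply, Complex.ofReal_sub]
      rw [this]
      calc ‖((h (α x) : ℝ) : ℂ)‖ = ‖h (α x)‖ := by simp
        _ ≤ ‖h‖ := h.norm_coe_le_norm _
    have hξC : M.nrm ξ ≤ C := Finset.single_le_sum (fun ξ _ => M.nrm_nonneg ξ) hξ
    calc M.nrm (M.smulR ξ A - M.smulR ξ B) = M.nrm (M.smulR ξ (A - B)) := by rw [hsub]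
      _ ≤ M.nrm ξ * ‖A - B‖ := M.nrm_smulR_le _ _
      _ ≤ (1 + C) * ‖A - B‖ := by
          apply mul_le_mul_of_nonneg_right _ (norm_nonneg _); linarith
      _ < (1 + C) * ε' := by
          exact mul_lt_mul_of_pos_left (lt_of_le_of_lt hAB hh) h1C
      _ = ε := by rw [hε'def]; field_simp
  · -- condition (4): automatic by commutativity
    intro a _ l k
    have : toC (f l k) * a - a * toC (f l k) = 0 := by rw [mul_comm]; ring
    rw [this, norm_zero]; exact hε
end

section
/- Let X be a compact metric space, α : X → X a homeomorphism, 𝒱 a line bundle, ℰ = Γ(𝒱,α), Y ⊆ X a nonempty closed subset, and ℰ_Y = C_0(X∖Y)·ℰ the orbit-breaking bimodule. Then for ξ ∈ ℰ: ξ ∈ ℰ_Y if and only if ξ vanishes on α^{-1}(Y). -/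
/-!
Over a compact base a line bundle has a finite frame: take a partition of unity `ρ_j`
subordinate to finitely many trivializations `e_j`, put `η_j = e_j⁻¹ (√ρ_j)` and
`φ_j = √ρ_j · e_j`; then `v = Σ_j φ_j(v) η_j` for every vector `v`. For a section `ξ`
vanishing on `α⁻¹(Y)` the coefficients `φ_j(ξ) ∘ α⁻¹` vanish on `Y`, so `ξ` is exactly
a finite sum of generators of `ℰ_Y`. Conversely, at a point of `α⁻¹(Y)` every generator
vanishes, hence so does every uniform limit of their sums.
-/

open Bundle Set Topology

namespace Bundle.Trivialization

variable {𝕜 B F : Type*} {E : B → Type*} [NontriviallyNormedField 𝕜] [TopologicalSpace B]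
  [NormedAddCommGroup F] [NormedSpace 𝕜 F] [∀ x, AddCommMonoid (E x)] [∀ x, Module 𝕜 (E x)]
  [TopologicalSpace (TotalSpace F E)] [∀ x, TopologicalSpace (E x)] [FiberBundle F E]
  (e : Trivialization F (π F E)) [e.IsLinear 𝕜]

theorem continuousOn_continuousLinearMapAt_section {ξ : ∀ x, E x}
    (hξ : Continuous fun x => TotalSpace.mk' F x (ξ x)) :
    ContinuousOn (fun x => e.continuousLinearMapAt 𝕜 x (ξ x)) e.baseSet :=
  (e.continuousOn.comp hξ.continuousOn fun _ hx => e.mem_source.2 hx).snd.congr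
    fun _ hx => e.continuousLinearMapAt_apply_of_mem (R := 𝕜) hx _

theorem continuous_smul_continuousLinearMapAt_section {c : B → 𝕜} (hc : Continuous c)
    (hce : tsupport c ⊆ e.baseSet) {ξ : ∀ x, E x}
    (hξ : Continuous fun x => TotalSpace.mk' F x (ξ x)) :
    Continuous fun x => c x • e.continuousLinearMapAt 𝕜 x (ξ x) :=
  (hc.continuousOn.smul
    (e.continuousOn_continuousLinearMapAt_section hξ)).continuous_of_tsupport_subset
    e.open_baseSet ((tsupport_smul_subset_left _ _).trans hce)

variable [VectorBundle 𝕜 F E]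

theorem continuous_symmL_of_tsupport_subset {g : B → F} (hg : Continuous g)
    (hge : tsupport g ⊆ e.baseSet) :
    Continuous fun x => TotalSpace.mk' F x (e.symmL 𝕜 x (g x)) := by
  refine continuous_iff_continuousAt.2 fun x => ?_
  by_cases hx : x ∈ e.baseSet
  · refine ContinuousOn.continuousAt ?_ (e.open_baseSet.mem_nhds hx)
    refine (e.continuousOn_symm.comp (continuous_id.prodMk hg).continuousOn
      fun y hy => mk_mem_prod hy (mem_univ _)).congr fun y hy => ?_
    simp [e.symmL_apply hy]
  · have hg0 : g =ᶠ[𝓝 x] 0 := notMem_tsupport_iff_eventuallyEq.1 fun h => hx (hge h)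
    refine (continuous_zeroSection 𝕜 (F := F) (E := E)).continuousAt.congr ?_
    filter_upwards [hg0] with y hy
    simp [zeroSection, hy]

end Bundle.Trivialization

theorem Bundle.Trivialization.smul_continuousLinearMapAt_smul_symmL {𝕜 B : Type*}
    {E : B → Type*} [NontriviallyNormedField 𝕜] [TopologicalSpace B] [∀ x, AddCommMonoid (E x)]
    [∀ x, Module 𝕜 (E x)] [TopologicalSpace (TotalSpace 𝕜 E)] [∀ x, TopologicalSpace (E x)]
    [FiberBundle 𝕜 E] (e : Trivialization 𝕜 (π 𝕜 E)) [e.IsLinear 𝕜] {x : B} (hx : x ∈ e.baseSet)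
    (c d : 𝕜) (v : E x) :
    (c • e.continuousLinearMapAt 𝕜 x v) • e.symmL 𝕜 x d = (c * d) • v := by
  rw [← map_smul, smul_eq_mul, smul_eq_mul, mul_right_comm, ← smul_eq_mul, map_smul,
    e.symmL_continuousLinearMapAt hx]

theorem CompactSpace.exists_fin_subcover_of_mem_nhds {X : Type*} [TopologicalSpace X]
    [CompactSpace X] (U : X → Set X) (hU : ∀ x, U x ∈ 𝓝 x) :
    ∃ (m : ℕ) (b : Fin m → X), ∀ x, ∃ i, x ∈ U (b i) := by
  obtain ⟨t, ht⟩ := CompactSpace.elim_nhds_subcover U hU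
  refine ⟨t.card, fun i => t.equivFin.symm i, fun x => ?_⟩
  obtain ⟨y, hy, hxy⟩ := mem_iUnion₂.1 (ht ▸ mem_univ x : x ∈ ⋃ y ∈ t, U y)
  exact ⟨t.equivFin ⟨y, hy⟩, by simpa using hxy⟩

theorem VectorBundle.exists_finite_frame {𝕜 B : Type*} {E : B → Type*} [RCLike 𝕜]
    [TopologicalSpace B] [CompactSpace B] [T2Space B]
    [∀ x, AddCommMonoid (E x)] [∀ x, Module 𝕜 (E x)]
    [TopologicalSpace (TotalSpace 𝕜 E)] [∀ x, TopologicalSpace (E x)] [FiberBundle 𝕜 E]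
    [VectorBundle 𝕜 𝕜 E] :
    ∃ (m : ℕ) (φ : Fin m → ∀ x, E x →L[𝕜] 𝕜) (η : Fin m → ∀ x, E x),
      (∀ i, Continuous fun x => TotalSpace.mk' 𝕜 x (η i x)) ∧
      (∀ i {ξ : ∀ x, E x}, Continuous (fun x => TotalSpace.mk' 𝕜 x (ξ x)) →
        Continuous fun x => φ i x (ξ x)) ∧
      ∀ x (v : E x), ∑ i, φ i x v • η i x = v := by
  obtain ⟨m, b, hb⟩ := CompactSpace.exists_fin_subcover_of_mem_nhds
    (fun x => (trivializationAt 𝕜 E x).baseSet)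
    fun x => (trivializationAt 𝕜 E x).open_baseSet.mem_nhds (mem_baseSet_trivializationAt 𝕜 E x)
  set e := fun i => trivializationAt 𝕜 E (b i)
  obtain ⟨ρ, hρ⟩ := PartitionOfUnity.exists_isSubordinate isClosed_univ (fun i => (e i).baseSet)
    (fun i => (e i).open_baseSet) fun x _ => mem_iUnion.2 (hb x)
  set s : Fin m → B → 𝕜 := fun i x => (√(ρ i x) : ℝ)
  have hs : ∀ i, Continuous (s i) := fun i => by fun_prop
  have hse : ∀ i, tsupport (s i) ⊆ (e i).baseSet := fun i =>
    (tsupport_comp_subset (g := fun r : ℝ => ((√r : ℝ) : 𝕜)) (by simp) (ρ i)).trans (hρ i)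
  refine ⟨m, fun i x => s i x • (e i).continuousLinearMapAt 𝕜 x,
    fun i x => (e i).symmL 𝕜 x (s i x),
    fun i => (e i).continuous_symmL_of_tsupport_subset (hs i) (hse i),
    fun i _ hξ => (e i).continuous_smul_continuousLinearMapAt_section (hs i) (hse i) hξ,
    fun x v => ?_⟩
  have hterm : ∀ i, (s i x • (e i).continuousLinearMapAt 𝕜 x) v • (e i).symmL 𝕜 x (s i x)
      = (ρ i x : 𝕜) • v := by
    intro i
    by_cases hx : x ∈ (e i).baseSet
    · rw [smul_apply, (e i).smul_continuousLinearMapAt_smul_symmL hx,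
        ← RCLike.ofReal_mul, Real.mul_self_sqrt (ρ.nonneg i x)]
    · have : ρ i x = 0 := image_eq_zero_of_notMem_tsupport fun h => hx (hρ i h)
      simp [s, this]
  rw [Finset.sum_congr rfl fun i _ => hterm i, ← Finset.sum_smul, ← RCLike.ofReal_sum,
    ← finsum_eq_sum_of_fintype, ρ.sum_eq_one (mem_univ x), RCLike.ofReal_one, one_smul]

theorem statement13_general
    (X : Type*) [MetricSpace X] [CompactSpace X]
    (α : X ≃ₜ X)
    (V : X → Type*) [∀ x, NormedAddCommGroup (V x)] [∀ x, InnerProductSpace ℂ (V x)]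
    [TopologicalSpace (Bundle.TotalSpace ℂ V)] [FiberBundle ℂ V] [VectorBundle ℂ ℂ V]
    (Y : Set X)
    (ξ : {s : ∀ x, V x //
        Continuous fun x => (Bundle.TotalSpace.mk x (s x) : Bundle.TotalSpace ℂ V)}) :
    -- ξ ∈ ℰ_Y = C₀(X∖Y)·ℰ (the closed linear span of {f·η : f|_Y = 0, η ∈ ℰ}) …
    (∀ ε > (0:ℝ), ∃ (m : ℕ) (f : Fin m → C(X, ℂ))
        (η : Fin m → {s : ∀ x, V x //
          Continuous fun x => (Bundle.TotalSpace.mk x (s x) : Bundle.TotalSpace ℂ V)}),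
      (∀ i, ∀ y ∈ Y, f i y = 0) ∧
      ∀ x : X, ‖ξ.1 x - ∑ i, f i (α x) • (η i).1 x‖ ≤ ε)
    ↔
    -- … if and only if ξ vanishes on α⁻¹(Y)
    (∀ x : X, α x ∈ Y → ξ.1 x = 0) := by
  constructor
  · intro happrox x hx
    refine norm_le_zero_iff.1 (le_of_forall_pos_le_add fun ε hε => ?_)
    obtain ⟨m, f, η, hfY, hfξ⟩ := happrox ε hε
    simpa [hfY _ _ hx] using hfξ x
  · intro hξY ε hε
    obtain ⟨m, φ, η, hη, hφ, hframe⟩ := VectorBundle.exists_finite_frame (𝕜 := ℂ) (E := V)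
    refine ⟨m, fun i => ⟨fun y => φ i (α.symm y) (ξ.1 (α.symm y)),
        (hφ i ξ.2).comp α.symm.continuous⟩, fun i => ⟨η i, hη i⟩, fun i y hy => ?_, fun x => ?_⟩
    · simp [hξY (α.symm y) (by simpa using hy)]
    · simp only [ContinuousMap.coe_mk]
      rw [α.symm_apply_apply, hframe, sub_self, norm_zero]
      exact hε.le

theorem statement13
    (X : Type*) [MetricSpace X] [CompactSpace X]
    (α : X ≃ₜ X)
    (V : X → Type*) [∀ x, NormedAddCommGroup (V x)] [∀ x, InnerProductSpace ℂ (V x)]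
    [TopologicalSpace (Bundle.TotalSpace ℂ V)] [FiberBundle ℂ V] [VectorBundle ℂ ℂ V]
    (Y : Set X) (hYne : Y.Nonempty) (hYcl : IsClosed Y)
    (ξ : {s : ∀ x, V x //
        Continuous fun x => (Bundle.TotalSpace.mk x (s x) : Bundle.TotalSpace ℂ V)}) :
    -- ξ ∈ ℰ_Y = C₀(X∖Y)·ℰ (the closed linear span of {f·η : f|_Y = 0, η ∈ ℰ}) …
    (∀ ε > (0:ℝ), ∃ (m : ℕ) (f : Fin m → C(X, ℂ))
        (η : Fin m → {s : ∀ x, V x //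
          Continuous fun x => (Bundle.TotalSpace.mk x (s x) : Bundle.TotalSpace ℂ V)}),
      (∀ i, ∀ y ∈ Y, f i y = 0) ∧
      ∀ x : X, ‖ξ.1 x - ∑ i, f i (α x) • (η i).1 x‖ ≤ ε)
    ↔
    -- … if and only if ξ vanishes on α⁻¹(Y)
    (∀ x : X, α x ∈ Y → ξ.1 x = 0) :=
  statement13_general X α V Y ξ
end

section
/- Let X be a compact metric space, α : X → X a homeomorphism, 𝒱 a line bundle, U ⊆ X an open set with 𝒱|_U trivial, and F ⊂ C(X) a finite set of functions all supported in U. Then there exists a section ξ ∈ Γ(𝒱,α) such that, in the Cuntz–Pimsner algebra, ξξ*·(f∘α^{-1}) = f∘α^{-1} and ξ*ξ·f = f for every f ∈ F. -/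
/-!
STATEMENT 19. Let `X` be a compact metric space, `α : X → X` a homeomorphism, `𝒱` a
Hermitian line bundle, `U ⊆ X` open with `𝒱|_U` trivial, and `F ⊂ C(X)` a finite set of
functions supported in `U`.  Then there is a continuous section `ξ ∈ Γ(𝒱,α)` such that,
in the Cuntz–Pimsner algebra `O(Γ(𝒱,α))` (given by a faithful covariant representation
`(p, t)`), `ξξ*·(f∘α⁻¹) = f∘α⁻¹` and `ξ*ξ·f = f` for every `f ∈ F`.
-/

/-- continuous sections of the line bundle `V` -/
def Sect {X : Type*} [TopologicalSpace X] (V : X → Type*)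
    [∀ x, NormedAddCommGroup (V x)] [TopologicalSpace (Bundle.TotalSpace ℂ V)] :
    Type _ :=
  {s : ∀ x, V x // Continuous fun x => (Bundle.TotalSpace.mk x (s x) : Bundle.TotalSpace ℂ V)}

/-- `𝒱` is trivial over `W` (for a line bundle: a continuous unit section over `W`). -/
def TrivialOver {X : Type*} [TopologicalSpace X] (V : X → Type*)
    [∀ x, NormedAddCommGroup (V x)] [TopologicalSpace (Bundle.TotalSpace ℂ V)]
    (W : Set X) : Prop :=
  ∃ s : ∀ x, V x,
    ContinuousOn (fun x => (Bundle.TotalSpace.mk x (s x) : Bundle.TotalSpace ℂ V)) W ∧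
    ∀ x ∈ W, ‖s x‖ = 1

/-- A faithful covariant representation `(p, t)` of the Hilbert `C(X)`-bimodule
`ℰ = Γ(𝒱,α)` on a C*-algebra `B`, generating (a copy of) the Cuntz–Pimsner algebra
`O(Γ(𝒱,α))`. -/
structure IsCovRep {X : Type*} [TopologicalSpace X] [CompactSpace X] (α : X ≃ₜ X)
    (V : X → Type*) [∀ x, NormedAddCommGroup (V x)] [∀ x, InnerProductSpace ℂ (V x)]
    [TopologicalSpace (Bundle.TotalSpace ℂ V)]
    (B : Type*) [NormedRing B] [StarRing B] [NormedAlgebra ℂ B]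
    (p : C(X, ℂ) →⋆ₐ[ℂ] B) (t : Sect V → B) : Prop where
  injective : Function.Injective p
  /-- τ is additive -/
  map_add : ∀ ξ η ζ : Sect V, (∀ x, ζ.1 x = ξ.1 x + η.1 x) → t ζ = t ξ + t η
  /-- `τ(ξ)* τ(η) = π(⟨ξ,η⟩_R)` -/
  inner_right : ∀ (ξ η : Sect V) (g : C(X, ℂ)),
    (∀ x, (inner ℂ (ξ.1 x) (η.1 x) : ℂ) = g x) → star (t ξ) * t η = p g
  /-- `τ(ξ) τ(η)* = π(⟨ξ,η⟩_L) = π(⟨η,ξ⟩_R ∘ α⁻¹)` (line bundle covariance) -/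
  inner_left : ∀ (ξ η : Sect V) (g : C(X, ℂ)),
    (∀ x, (inner ℂ (η.1 (α.symm x)) (ξ.1 (α.symm x)) : ℂ) = g x) →
      t ξ * star (t η) = p g
  /-- left action: `π(f) τ(ξ) = τ(f·ξ)`, `(f·ξ)(x) = f(α x) • ξ(x)` -/
  left_act : ∀ (f : C(X, ℂ)) (ξ η : Sect V),
    (∀ x, η.1 x = f (α x) • ξ.1 x) → t η = p f * t ξ
  /-- right action: `τ(ξ) π(f) = τ(ξ·f)` -/
  right_act : ∀ (f : C(X, ℂ)) (ξ η : Sect V),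
    (∀ x, η.1 x = f x • ξ.1 x) → t η = t ξ * p f

/-!
Let `s` be a unit section of `𝒱` over `U` and `γ : X → [0, 1]` an Urysohn function with
`tsupport γ ⊆ U` and `γ = 1` on the supports of `F`. The section `ξ = √γ · s` extends by zero
to a continuous section with `⟨ξ, ξ⟩_R = γ`, so `ξ*ξ = γ` and `ξξ* = γ ∘ α⁻¹`, and `γ f = f`
for every `f ∈ F`.
-/

open Bundle Set

section SmulSection

variable {𝕜 B F : Type*} {E : B → Type*} [NontriviallyNormedField 𝕜]
  [NormedAddCommGroup F] [NormedSpace 𝕜 F] [TopologicalSpace B]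
  [∀ x, AddCommMonoid (E x)] [∀ x, Module 𝕜 (E x)] [TopologicalSpace (TotalSpace F E)]
  [∀ x, TopologicalSpace (E x)] [FiberBundle F E] [VectorBundle 𝕜 F E]
  {ψ : B → 𝕜} {s : ∀ x, E x}

theorem ContinuousAt.smul_section {x₀ : B} (hψ : ContinuousAt ψ x₀)
    (hs : ContinuousAt (fun x ↦ TotalSpace.mk' F x (s x)) x₀) :
    ContinuousAt (fun x ↦ TotalSpace.mk' F x (ψ x • s x)) x₀ := by
  rw [FiberBundle.continuousAt_section] at hs ⊢
  have hlin : ∀ᶠ x in nhds x₀, (trivializationAt F E x₀ ⟨x, ψ x • s x⟩).2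
      = ψ x • (trivializationAt F E x₀ ⟨x, s x⟩).2 := by
    filter_upwards [(trivializationAt F E x₀).open_baseSet.mem_nhds
      (FiberBundle.mem_baseSet_trivializationAt' x₀)] with x hx
    exact ((trivializationAt F E x₀).linear 𝕜 hx).map_smul _ _
  exact (hψ.smul hs).congr (hlin.mono fun _ h ↦ h.symm)

theorem ContinuousOn.smul_section_of_tsupport {u : Set B} (hψ : Continuous ψ) (hu : IsOpen u)
    (hψu : tsupport ψ ⊆ u) (hs : ContinuousOn (fun x ↦ TotalSpace.mk' F x (s x)) u) :
    Continuous (fun x ↦ TotalSpace.mk' F x (ψ x • s x)) := by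
  have hzero : ContinuousOn (fun x ↦ TotalSpace.mk' F x (ψ x • s x)) (tsupport ψ)ᶜ := by
    refine (Trivialization.continuous_zeroSection 𝕜 (F := F) (E := E)).continuousOn.congr
      fun x hx ↦ ?_
    simp [image_eq_zero_of_notMem_tsupport hx, zeroSection]
  have hon : ContinuousOn (fun x ↦ TotalSpace.mk' F x (ψ x • s x)) u := fun x hx ↦
    (hψ.continuousAt.smul_section (hs.continuousAt (hu.mem_nhds hx))).continuousWithinAt
  rw [← continuousOn_univ, ← compl_subset_iff_union.mp (compl_subset_compl.mpr hψu)]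
  exact hon.union_of_isOpen hzero hu (isClosed_tsupport ψ).isOpen_compl

end SmulSection

theorem inner_sqrt_smul_self {𝕜 E : Type*} [RCLike 𝕜] [SeminormedAddCommGroup E]
    [InnerProductSpace 𝕜 E] {r : ℝ} (hr : 0 ≤ r) (v : E) :
    inner 𝕜 (((√r : ℝ) : 𝕜) • v) (((√r : ℝ) : 𝕜) • v) = ((r * ‖v‖ ^ 2 : ℝ) : 𝕜) := by
  rw [inner_self_eq_norm_sq_to_K, norm_smul, RCLike.norm_ofReal,
    abs_of_nonneg (Real.sqrt_nonneg r)]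
  push_cast
  rw [mul_pow, ← RCLike.ofReal_pow, Real.sq_sqrt hr]

theorem ContinuousMap.mul_eq_right_of_eqOn_support {X R : Type*} [TopologicalSpace X]
    [MulZeroOneClass R] [TopologicalSpace R] [ContinuousMul R] {g f : C(X, R)}
    (hg : EqOn g 1 (Function.support f)) : g * f = f := by
  ext x
  by_cases hx : f x = 0
  · simp [hx]
  · simp [hg hx]

theorem TrivialOver.exists_sect_inner_self_eq {X : Type*} [TopologicalSpace X]
    {V : X → Type*} [∀ x, NormedAddCommGroup (V x)] [∀ x, InnerProductSpace ℂ (V x)]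
    [TopologicalSpace (TotalSpace ℂ V)] [FiberBundle ℂ V] [VectorBundle ℂ ℂ V]
    {U : Set X} (hU : IsOpen U) (htriv : TrivialOver V U) {γ : C(X, ℝ)} (hγ : 0 ≤ γ)
    (hγU : tsupport γ ⊆ U) :
    ∃ ξ : Sect V, ∀ x, (inner ℂ (ξ.1 x) (ξ.1 x) : ℂ) = γ x := by
  obtain ⟨s, hs, hs_norm⟩ := htriv
  have hψU : tsupport (fun x ↦ ((√(γ x) : ℝ) : ℂ)) ⊆ U :=
    (tsupport_comp_subset (g := fun r : ℝ ↦ ((√r : ℝ) : ℂ)) (by simp) γ).trans hγU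
  refine ⟨⟨fun x ↦ ((√(γ x) : ℝ) : ℂ) • s x,
    ContinuousOn.smul_section_of_tsupport (by fun_prop) hU hψU hs⟩, fun x ↦ ?_⟩
  calc inner ℂ (((√(γ x) : ℝ) : ℂ) • s x) (((√(γ x) : ℝ) : ℂ) • s x)
      = ((γ x * ‖s x‖ ^ 2 : ℝ) : ℂ) := inner_sqrt_smul_self (hγ x) (s x)
    _ = γ x := by
      by_cases hx : x ∈ U
      · simp [hs_norm x hx]
      · simp [image_eq_zero_of_notMem_tsupport (fun h ↦ hx (hγU h))]

theorem statement19_general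
    (X : Type*) [MetricSpace X] [CompactSpace X]
    (α : X ≃ₜ X)
    (V : X → Type*) [∀ x, NormedAddCommGroup (V x)] [∀ x, InnerProductSpace ℂ (V x)]
    [TopologicalSpace (Bundle.TotalSpace ℂ V)] [FiberBundle ℂ V] [VectorBundle ℂ ℂ V]
    (B : Type*) [NormedRing B] [StarRing B] [NormedAlgebra ℂ B]
    (p : C(X, ℂ) →⋆ₐ[ℂ] B) (t : Sect V → B)
    (hrep : IsCovRep α V B p t)
    (U : Set X) (hU : IsOpen U) (htriv : TrivialOver V U)
    (F : Finset C(X, ℂ)) (hF : ∀ f ∈ F, tsupport ⇑f ⊆ U) :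
    ∃ ξ : Sect V, ∀ f ∈ F,
      -- ξξ* (f∘α⁻¹) = f∘α⁻¹ …
      t ξ * star (t ξ) * p (f.comp ⟨⇑α.symm, α.symm.continuous⟩)
          = p (f.comp ⟨⇑α.symm, α.symm.continuous⟩) ∧
      -- … and ξ*ξ f = f
      star (t ξ) * t ξ * p f = p f := by
  obtain ⟨γ, hγU, hγ_one, hγ_mem⟩ := exists_tsupport_one_of_isOpen_isClosed hU
    isClosed_closure.isCompact (F.finite_toSet.isClosed_biUnion fun f _ ↦ isClosed_tsupport f)
    (iUnion₂_subset hF)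
  obtain ⟨ξ, hξ⟩ := htriv.exists_sect_inner_self_eq hU (fun x ↦ (hγ_mem x).1) hγU
  let γc : C(X, ℂ) := ⟨fun x ↦ (γ x : ℂ), by fun_prop⟩
  have hγf : ∀ f ∈ F, γc * f = f := fun f hf ↦
    ContinuousMap.mul_eq_right_of_eqOn_support fun x hx ↦ by
      simp [γc, hγ_one (mem_biUnion hf (subset_tsupport f hx))]
  refine ⟨ξ, fun f hf ↦ ⟨?_, ?_⟩⟩
  · rw [hrep.inner_left ξ ξ (γc.comp ⟨α.symm, α.symm.continuous⟩) fun x ↦ hξ _, ← map_mul,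
      ← ContinuousMap.mul_comp, hγf f hf]
  · rw [hrep.inner_right ξ ξ γc hξ, ← map_mul, hγf f hf]

theorem statement19
    (X : Type*) [MetricSpace X] [CompactSpace X]
    (α : X ≃ₜ X)
    (V : X → Type*) [∀ x, NormedAddCommGroup (V x)] [∀ x, InnerProductSpace ℂ (V x)]
    [TopologicalSpace (Bundle.TotalSpace ℂ V)] [FiberBundle ℂ V] [VectorBundle ℂ ℂ V]
    (B : Type*) [NormedRing B] [StarRing B] [CStarRing B] [NormedAlgebra ℂ B]
    [CompleteSpace B]
    (p : C(X, ℂ) →⋆ₐ[ℂ] B) (t : Sect V → B)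
    (hrep : IsCovRep α V B p t)
    (U : Set X) (hU : IsOpen U) (htriv : TrivialOver V U)
    (F : Finset C(X, ℂ)) (hF : ∀ f ∈ F, tsupport ⇑f ⊆ U) :
    ∃ ξ : Sect V, ∀ f ∈ F,
      -- ξξ* (f∘α⁻¹) = f∘α⁻¹ …
      t ξ * star (t ξ) * p (f.comp ⟨⇑α.symm, α.symm.continuous⟩)
          = p (f.comp ⟨⇑α.symm, α.symm.continuous⟩) ∧
      -- … and ξ*ξ f = f
      star (t ξ) * t ξ * p f = p f :=
  statement19_general X α V B p t hrep U hU htriv F hF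
end
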